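/- arXiv:2010.10494 — 6 statements merged into one kernel-verified Lean document; each statement's English description precedes it below -/
import Mathlib

section
/- For every integer m ≥ 3 the (m,1) secure decentralized pliable index coding problem with circular side information is not linearly feasible: for every length ℓ and every decentralized linear code G of length ℓ for parameters (m, s = 1), G is not simultaneously correct and secure. -/
/-!
With one side-information message per user, every encodable row is supported on a single index,
so (over `GF(2)`) it is either zero or a basis vector `e j`. Hence user `i` decodes exactly the
indices `K \ {i}`, where `K` is the union of the row supports. Correctness forces `K` to contain
two distinct indices `j₀, j₁`, and any third user `i ∉ {j₀, j₁}` (which exists as `m ≥ 3`) then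
decodes both, contradicting security.
-/

namespace SDPicod

/-- Side information set of user `i`: the `s` cyclically consecutive message
indices ending at `i`, i.e. `{i - k : k ∈ Finset.range s}`. -/
def sideInfo (m s : ℕ) (i : ZMod m) : Set (ZMod m) :=
  {j | ∃ k ∈ Finset.range s, j = i - (k : ZMod m)}

/-- A decentralized linear code: every row is encodable by some user, i.e.
its support is contained in that user's side information set. -/
def IsDecentralizedCode (m s : ℕ) {ℓ : ℕ} (G : Fin ℓ → ZMod m → ZMod 2) : Prop :=
  ∀ t : Fin ℓ, ∃ i : ZMod m, Function.support (G t) ⊆ sideInfo m s i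

/-- The set of message indices user `i` can decode: indices `j` outside the
side information set such that the standard basis vector `e j` lies in the
`GF(2)`-span of the rows of `G` together with the basis vectors of the
side information set. -/
def decSet (m s : ℕ) {ℓ : ℕ} (G : Fin ℓ → ZMod m → ZMod 2) (i : ZMod m) :
    Set (ZMod m) :=
  {j | j ∉ sideInfo m s i ∧
    Pi.single j (1 : ZMod 2) ∈ Submodule.span (ZMod 2)
      (Set.range G ∪ {v | ∃ k ∈ sideInfo m s i, v = Pi.single k (1 : ZMod 2)})}

/-- Correctness: every user can decode at least one new message. -/
def Correct (m s : ℕ) {ℓ : ℕ} (G : Fin ℓ → ZMod m → ZMod 2) : Prop :=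
  ∀ i : ZMod m, (decSet m s G i).Nonempty

/-- Security: no user can decode more than one new message. -/
def Secure (m s : ℕ) {ℓ : ℕ} (G : Fin ℓ → ZMod m → ZMod 2) : Prop :=
  ∀ i : ZMod m, (decSet m s G i).Subsingleton

end SDPicod

open SDPicod

theorem Pi.eq_single_of_support_subset {ι M : Type*} [DecidableEq ι] [Zero M] {v : ι → M}
    {j : ι} (hv : Function.support v ⊆ {j}) : v = Pi.single j (v j) := by
  funext x
  by_cases hx : x = j
  · subst hx; simp
  · rw [Pi.single_eq_of_ne hx]
    by_contra h
    exact hx (hv h)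

theorem Pi.single_one_mem_span_of_support_subset {ι K : Type*} [DecidableEq ι] [Field K]
    {v : ι → K} {j : ι} (hv : Function.support v ⊆ {j}) (hvj : v j ≠ 0) :
    Pi.single j 1 ∈ Submodule.span K {v} := by
  have hsmul : Pi.single j (1 : K) = (v j)⁻¹ • v := by
    rw [Pi.eq_single_of_support_subset hv, ← Pi.single_smul', smul_eq_mul, Pi.single_eq_same,
      inv_mul_cancel₀ hvj]
  rw [hsmul]
  exact Submodule.smul_mem _ _ (Submodule.mem_span_singleton_self v)

theorem Pi.exists_apply_ne_zero_of_single_mem_span {ι R : Type*} [DecidableEq ι] [Semiring R]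
    [Nontrivial R] {S : Set (ι → R)} {j : ι} (h : Pi.single j 1 ∈ Submodule.span R S) :
    ∃ v ∈ S, v j ≠ 0 := by
  by_contra! hS
  have hle : Submodule.span R S ≤ LinearMap.ker (LinearMap.proj j) :=
    Submodule.span_le.mpr hS
  simpa using hle h

theorem Set.exists_nontrivial_diff_singleton {α : Type*} (hα : 3 ≤ ENat.card α) {K : Set α}
    (hK : ∀ i, (K \ {i}).Nonempty) : ∃ i, (K \ {i}).Nontrivial := by
  obtain ⟨a⟩ := (ENat.one_le_card_iff_nonempty α).mp (le_trans (by norm_num) hα)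
  obtain ⟨j₀, hj₀K, -⟩ := hK a
  obtain ⟨j₁, hj₁K, hj₁j₀⟩ := hK j₀
  obtain ⟨i, hij₀, hij₁⟩ := ENat.exists_ne_ne_of_three_le hα j₀ j₁
  exact ⟨i, j₀, ⟨hj₀K, hij₀.symm⟩, j₁, ⟨hj₁K, hij₁.symm⟩, fun h => hj₁j₀ h.symm⟩

namespace SDPicod

theorem sideInfo_one (m : ℕ) (i : ZMod m) : sideInfo m 1 i = {i} := by
  ext j
  simp [sideInfo]

theorem decSet_one_eq {m ℓ : ℕ} {G : Fin ℓ → ZMod m → ZMod 2} (hG : IsDecentralizedCode m 1 G)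
    (i : ZMod m) : decSet m 1 G i = (⋃ t, Function.support (G t)) \ {i} := by
  ext j
  simp only [decSet, sideInfo_one, Set.mem_singleton_iff, exists_eq_left,
    Set.ofPred_eq_eq_singleton, Set.mem_sdiff, Set.mem_iUnion, Function.mem_support]
  constructor
  · rintro ⟨hji, hspan⟩
    refine ⟨?_, hji⟩
    obtain ⟨v, hv, hvj⟩ := Pi.exists_apply_ne_zero_of_single_mem_span hspan
    rcases hv with ⟨t, rfl⟩ | rfl
    · exact ⟨t, hvj⟩
    · exact absurd (by simpa [Pi.single_apply] using hvj) hji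
  · rintro ⟨⟨t, hjt⟩, hji⟩
    refine ⟨hji, ?_⟩
    obtain ⟨k, hk⟩ := hG t
    rw [sideInfo_one] at hk
    have hsupp : Function.support (G t) ⊆ {j} := by
      rwa [Set.mem_singleton_iff.mp (hk hjt)]
    exact Submodule.span_mono (by simp)
      (Pi.single_one_mem_span_of_support_subset hsupp hjt)

end SDPicod

theorem infeasible_s_eq_one (m : ℕ) (hm : 3 ≤ m)
    (ℓ : ℕ) (G : Fin ℓ → ZMod m → ZMod 2)
    (hG : IsDecentralizedCode m 1 G) :
    ¬ (Correct m 1 G ∧ Secure m 1 G) := by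
  rintro ⟨hcorrect, hsecure⟩
  have : NeZero m := ⟨by omega⟩
  have hcard : 3 ≤ ENat.card (ZMod m) := by
    simpa [ENat.card_eq_coe_fintype_card, ZMod.card] using hm
  obtain ⟨i, hi⟩ := Set.exists_nontrivial_diff_singleton hcard
    (fun i => decSet_one_eq hG i ▸ hcorrect i)
  exact hi.not_subsingleton (decSet_one_eq hG i ▸ hsecure i)
end

section
/- For every integer m ≥ 5 the (m,2) secure decentralized pliable index coding problem with circular side information is not linearly feasible: for every length ℓ and every decentralized linear code G of length ℓ for parameters (m, s = 2), G is not simultaneously correct and secure. -/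
open SDPicod

/-! Let `V` be the row space. With `s = 2` every row is supported on two cyclically adjacent
indices, so a nonzero row (one exists by correctness) gives a vector `e a + c • e (a + 1) ∈ V`.
User `a + 1` decodes some `j`; reducing its decoding relation by that vector leaves
`e j + c' • e (a + 1) ∈ V`. If `c' = 1`, user `a + 2` decodes both `a` and `j` unless
`j = a + 2`, and then user `a + 3` decodes both `a` and `a + 1`. So `c' = 0`, i.e. `e j ∈ V`
with `j ≠ a`. Restarting from `e j` gives a second `e k ∈ V` with `k ≠ j`, and when `m ≥ 5`
some user's side information avoids `j`, `k` and their predecessors, so that user decodes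
both. -/

lemma Function.eq_single_add_single_of_support_subset {ι M : Type*} [DecidableEq ι]
    [AddCommMonoid M] {f : ι → M} {a b : ι} (hab : a ≠ b)
    (hf : Function.support f ⊆ {a, b}) : f = Pi.single a (f a) + Pi.single b (f b) := by
  funext x
  by_cases hxa : x = a
  · subst hxa; simp [hab]
  by_cases hxb : x = b
  · subst hxb; simp [hxa]
  simpa [hxa, hxb] using Function.notMem_support.mp fun hx => by simpa [hxa, hxb] using hf hx

lemma ZMod.natCast_ne_zero_of_lt {m d : ℕ} (hd : 0 < d) (hdm : d < m) : (d : ZMod m) ≠ 0 := by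
  rw [Ne, ZMod.natCast_eq_zero_iff]
  exact Nat.not_dvd_of_pos_of_lt hd hdm

lemma ZMod.eq_zero_or_eq_one (x : ZMod 2) : x = 0 ∨ x = 1 := by
  revert x
  decide

namespace SDPicod

variable {m ℓ : ℕ} {G : Fin ℓ → ZMod m → ZMod 2}

abbrev rowSpan (G : Fin ℓ → ZMod m → ZMod 2) : Submodule (ZMod 2) (ZMod m → ZMod 2) :=
  Submodule.span (ZMod 2) (Set.range G)

lemma sideInfo_two_add_one (i : ZMod m) : sideInfo m 2 (i + 1) = {i + 1, i} := by
  ext j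
  simp [sideInfo, Finset.mem_range, Nat.le_one_iff_eq_zero_or_eq_one, or_comm, eq_comm]

lemma mem_decSet_two_add_one_iff {i j : ZMod m} :
    j ∈ decSet m 2 G (i + 1) ↔ j ≠ i + 1 ∧ j ≠ i ∧
      Pi.single j 1 ∈ rowSpan G ⊔ Submodule.span (ZMod 2) {Pi.single (i + 1) 1, Pi.single i 1} := by
  have hside : {v : ZMod m → ZMod 2 | ∃ k ∈ sideInfo m 2 (i + 1), v = Pi.single k 1} =
      {Pi.single (i + 1) 1, Pi.single i 1} := by
    ext v
    simp [sideInfo_two_add_one, eq_comm]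
  rw [decSet, Set.mem_ofPred_eq, hside, Submodule.span_union, sideInfo_two_add_one]
  simp only [Set.mem_insert_iff, Set.mem_singleton_iff, not_or, and_assoc]

lemma mem_decSet_two_of_add_smul_mem {i j : ZMod m} (hji : j ≠ i + 1) (hji' : j ≠ i) {c : ZMod 2}
    (h : Pi.single j 1 + c • Pi.single i 1 ∈ rowSpan G) : j ∈ decSet m 2 G (i + 1) := by
  refine mem_decSet_two_add_one_iff.mpr ⟨hji, hji', ?_⟩
  rw [show (Pi.single j 1 : ZMod m → ZMod 2) =
    (Pi.single j 1 + c • Pi.single i 1) + (-c) • Pi.single i 1 by module]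
  exact Submodule.add_mem_sup h (Submodule.smul_mem _ _ (Submodule.subset_span (by simp)))

lemma exists_sub_smul_mem_of_mem_decSet_two {i j : ZMod m} (hj : j ∈ decSet m 2 G (i + 1)) :
    ∃ c d : ZMod 2, Pi.single j 1 - c • Pi.single (i + 1) 1 - d • Pi.single i 1 ∈ rowSpan G := by
  obtain ⟨-, -, hj⟩ := mem_decSet_two_add_one_iff.mp hj
  obtain ⟨y, hy, z, hz, hyz⟩ := Submodule.mem_sup.mp hj
  obtain ⟨c, d, rfl⟩ := Submodule.mem_span_pair.mp hz
  refine ⟨c, d, ?_⟩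
  rwa [← hyz, sub_sub, add_sub_cancel_right]

lemma Correct.rowSpan_ne_bot (hC : Correct m 2 G) : rowSpan G ≠ ⊥ := by
  obtain ⟨j, hj⟩ := hC (0 + 1)
  obtain ⟨hj1, hj0, -⟩ := mem_decSet_two_add_one_iff.mp hj
  obtain ⟨c, d, hcd⟩ := exists_sub_smul_mem_of_mem_decSet_two hj
  intro hV
  rw [hV, Submodule.mem_bot, zero_add] at hcd
  rw [zero_add] at hj1
  simpa [hj1, hj0] using congr_fun hcd j

lemma exists_add_smul_single_mem_rowSpan [Fact (1 < m)] (hG : IsDecentralizedCode m 2 G)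
    (hV : rowSpan G ≠ ⊥) :
    ∃ (a : ZMod m) (c : ZMod 2), Pi.single a 1 + c • Pi.single (a + 1) 1 ∈ rowSpan G := by
  obtain ⟨_, ⟨t, rfl⟩, ht⟩ : ∃ x ∈ Set.range G, x ≠ 0 := by
    simpa [Submodule.span_eq_bot] using hV
  have hmem : G t ∈ rowSpan G := Submodule.subset_span ⟨t, rfl⟩
  obtain ⟨i, hi⟩ := hG t
  obtain ⟨b, rfl⟩ : ∃ b, i = b + 1 := ⟨i - 1, (sub_add_cancel i 1).symm⟩
  rw [sideInfo_two_add_one] at hi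
  have hrow := Function.eq_single_add_single_of_support_subset (by simp) hi
  rcases ZMod.eq_zero_or_eq_one (G t b) with h0 | h1
  · rw [h0, Pi.single_zero, add_zero] at hrow
    have h1 : G t (b + 1) = 1 := by
      refine (ZMod.eq_zero_or_eq_one _).resolve_left fun h => ht ?_
      rw [hrow, h, Pi.single_zero]
    refine ⟨b + 1, 0, ?_⟩
    rwa [zero_smul, add_zero, ← h1, ← hrow]
  · rw [h1] at hrow
    refine ⟨b, G t (b + 1), ?_⟩
    rwa [← Pi.single_smul', smul_eq_mul, mul_one, add_comm, ← hrow]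

lemma not_secure_of_add_single_mem_rowSpan (hm : 4 ≤ m) {a j : ZMod m} {c : ZMod 2}
    (hc : Pi.single a 1 + c • Pi.single (a + 1) 1 ∈ rowSpan G)
    (hj : Pi.single j 1 + Pi.single (a + 1) 1 ∈ rowSpan G) (hja : j ≠ a) (hja' : j ≠ a + 1) :
    ¬ Secure m 2 G := by
  intro hS
  have h1 : ((1 : ℕ) : ZMod m) ≠ 0 := ZMod.natCast_ne_zero_of_lt one_pos (by omega)
  have h2 : ((2 : ℕ) : ZMod m) ≠ 0 := ZMod.natCast_ne_zero_of_lt two_pos (by omega)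
  have h3 : ((3 : ℕ) : ZMod m) ≠ 0 := ZMod.natCast_ne_zero_of_lt three_pos (by omega)
  push_cast at h1 h2 h3
  by_cases hj2 : j = a + 1 + 1
  · subst hj2
    have ha : a ∈ decSet m 2 G (a + 1 + 1 + 1) :=
      mem_decSet_two_of_add_smul_mem (c := -c) (fun h => h3 (by linear_combination -h))
        (fun h => h2 (by linear_combination -h))
        (by convert sub_mem hc (Submodule.smul_mem _ c hj) using 1; module)
    have ha' : a + 1 ∈ decSet m 2 G (a + 1 + 1 + 1) :=
      mem_decSet_two_of_add_smul_mem (c := 1) (fun h => h2 (by linear_combination -h))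
        (fun h => h1 (by linear_combination -h)) (by simpa [add_comm] using hj)
    exact (fun h => h1 (by linear_combination -h) : a ≠ a + 1) (hS _ ha ha')
  · have ha : a ∈ decSet m 2 G (a + 1 + 1) :=
      mem_decSet_two_of_add_smul_mem (fun h => h2 (by linear_combination -h))
        (fun h => h1 (by linear_combination -h)) hc
    exact hja (hS _ (mem_decSet_two_of_add_smul_mem (c := 1) hj2 hja' (by simpa)) ha)

lemma exists_single_mem_rowSpan_ne (hm : 4 ≤ m) (hC : Correct m 2 G) (hS : Secure m 2 G)
    {a : ZMod m} {c : ZMod 2} (hc : Pi.single a 1 + c • Pi.single (a + 1) 1 ∈ rowSpan G) :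
    ∃ j ≠ a, Pi.single j 1 ∈ rowSpan G := by
  obtain ⟨j, hj⟩ := hC (a + 1)
  obtain ⟨hja', hja, -⟩ := mem_decSet_two_add_one_iff.mp hj
  obtain ⟨c₁, d₁, hcd⟩ := exists_sub_smul_mem_of_mem_decSet_two hj
  have hred : Pi.single j 1 + (d₁ * c - c₁) • Pi.single (a + 1) 1 ∈ rowSpan G := by
    convert add_mem hcd (Submodule.smul_mem _ d₁ hc) using 1
    module
  rcases ZMod.eq_zero_or_eq_one (d₁ * c - c₁) with h0 | h1
  · exact ⟨j, hja, by simpa [h0] using hred⟩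
  · exact absurd hS
      (not_secure_of_add_single_mem_rowSpan hm hc (by simpa [h1] using hred) hja hja')

lemma Secure.eq_of_single_mem_rowSpan (hS : Secure m 2 G) (hm : 5 ≤ m) {j k : ZMod m}
    (hj : Pi.single j 1 ∈ rowSpan G) (hk : Pi.single k 1 ∈ rowSpan G) : j = k := by
  have : NeZero m := ⟨by omega⟩
  obtain ⟨b, -, hb⟩ := Finset.exists_mem_notMem_of_card_lt_card
    (s := {j, j - 1, k, k - 1}) (t := Finset.univ)
    (by rw [Finset.card_univ, ZMod.card]; exact Finset.card_le_four.trans_lt hm)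
  simp only [Finset.mem_insert, Finset.mem_singleton, not_or] at hb
  obtain ⟨hbj, hbj', hbk, hbk'⟩ := hb
  have hne : ∀ x : ZMod m, b ≠ x → b ≠ x - 1 → x ≠ b + 1 ∧ x ≠ b := fun x h h' =>
    ⟨fun hx => h' (eq_sub_of_add_eq hx.symm), Ne.symm h⟩
  exact hS (b + 1)
    (mem_decSet_two_of_add_smul_mem (c := 0) (hne j hbj hbj').1 (hne j hbj hbj').2 (by simpa))
    (mem_decSet_two_of_add_smul_mem (c := 0) (hne k hbk hbk').1 (hne k hbk hbk').2 (by simpa))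

end SDPicod

theorem infeasible_s_eq_two (m : ℕ) (hm : 5 ≤ m)
    (ℓ : ℕ) (G : Fin ℓ → ZMod m → ZMod 2)
    (hG : IsDecentralizedCode m 2 G) :
    ¬ (Correct m 2 G ∧ Secure m 2 G) := by
  rintro ⟨hC, hS⟩
  have : Fact (1 < m) := ⟨by omega⟩
  obtain ⟨a, c, hseed⟩ := exists_add_smul_single_mem_rowSpan hG hC.rowSpan_ne_bot
  obtain ⟨j, -, hj⟩ := exists_single_mem_rowSpan_ne (by omega) hC hS hseed
  obtain ⟨k, hkj, hk⟩ := exists_single_mem_rowSpan_ne (c := 0) (by omega) hC hS (by simpa using hj)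
  exact hkj (hS.eq_of_single_mem_rowSpan hm hk hj)
end

section
/- For every odd integer m ≥ 7 the (m,3) secure decentralized pliable index coding problem with circular side information is not linearly feasible: for every length ℓ and every decentralized linear code G of length ℓ for parameters (m, s = 3), G is not simultaneously correct and secure. -/
open SDPicod

/-!
Let `V` be the span of the rows. A singleton `e b` or a pair `e b + e (b + 2)` in `V` would,
together with the vector by which user `b`, resp. `b + 2`, decodes, reveal two messages to one
user; so every nonzero row, being supported on three consecutive positions, is the indicator of
a block `c, …, c + k - 1` with `k ∈ {2, 3}`. Distinct blocks in `V` are disjoint, again because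
every way of overlapping reveals two messages to one user. By disjointness, each user decodes
through a single block, and the block `(c, k)` can only serve the users `c + k - 2` and `c + 3`.
Hence `m ≤ 2 · #blocks`, while disjoint blocks of size at least two give `2 · #blocks ≤ m`, so
`m` is even.

Every local configuration is translated to offsets in `ℕ` and checked by `decide`.
-/

open Finset Submodule

namespace SDPicod

section Span

variable {R ι : Type*} [Ring R]

theorem mem_span_image_single_iff [Finite ι] [DecidableEq ι] {A : Set ι} {u : ι → R} :
    u ∈ span R ((fun k => Pi.single k 1) '' A) ↔ ∀ x ∉ A, u x = 0 := by
  have : (fun k => Pi.single k (1 : R)) = ⇑(Pi.basisFun R ι) :=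
    funext fun k => (Pi.basisFun_apply R ι k).symm
  rw [this, Module.Basis.mem_span_image]
  simp [Set.subset_def, not_imp_comm]

theorem single_mem_sup_span_image_single_iff [Finite ι] [DecidableEq ι]
    {V : Submodule R (ι → R)} {A : Set ι} {j : ι} :
    Pi.single j 1 ∈ V ⊔ span R ((fun k => Pi.single k 1) '' A) ↔
      ∃ v ∈ V, ∀ x ∉ A, v x = (Pi.single j 1 : ι → R) x := by
  simp only [Submodule.mem_sup, mem_span_image_single_iff]
  constructor
  · rintro ⟨v, hv, u, hu, hvu⟩
    exact ⟨v, hv, fun x hx => by simp [← hvu, hu x hx]⟩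
  · rintro ⟨v, hv, h⟩
    exact ⟨v, hv, Pi.single j 1 - v, fun x hx => by simp [h x hx], add_sub_cancel v _⟩

theorem exists_mem_support_subset_of_mem_span [NoZeroDivisors R] {S : Set (ι → R)}
    (hS : S.Pairwise fun w w' => Disjoint w.support w'.support) {v : ι → R}
    (hv : v ∈ span R S) {x : ι} (hx : v x ≠ 0) :
    ∃ w ∈ S, w x ≠ 0 ∧ w.support ⊆ v.support := by
  have key : ∀ v ∈ span R S, (∀ w ∈ S, ∃ c : R, ∀ y, w y ≠ 0 → v y = c * w y) ∧
      ∀ x, v x ≠ 0 → ∃ w ∈ S, w x ≠ 0 := by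
    intro v hv
    induction hv using span_induction with
    | mem w' hw' =>
      refine ⟨fun w hw => ?_, fun x hx => ⟨w', hw', hx⟩⟩
      by_cases h : w' = w
      · exact ⟨1, by simp [h]⟩
      · exact ⟨0, fun y hy => by
          simpa using Function.notMem_support.1 (Set.disjoint_right.1 (hS hw' hw h) hy)⟩
    | zero => exact ⟨fun w _ => ⟨0, by simp⟩, fun x hx => absurd rfl hx⟩
    | add v₁ v₂ _ _ h₁ h₂ =>
      refine ⟨fun w hw => ?_, fun x hx => ?_⟩
      · obtain ⟨c₁, hc₁⟩ := h₁.1 w hw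
        obtain ⟨c₂, hc₂⟩ := h₂.1 w hw
        exact ⟨c₁ + c₂, fun y hy => by simp [hc₁ y hy, hc₂ y hy, add_mul]⟩
      · by_cases h : v₁ x = 0
        · exact h₂.2 x (by simpa [h] using hx)
        · exact h₁.2 x h
    | smul r v _ h =>
      refine ⟨fun w hw => ?_, fun x hx => h.2 x (right_ne_zero_of_mul hx)⟩
      obtain ⟨c, hc⟩ := h.1 w hw
      exact ⟨r * c, fun y hy => by simp [hc y hy, mul_assoc]⟩
  obtain ⟨w, hw, hwx⟩ := (key v hv).2 x hx
  obtain ⟨c, hc⟩ := (key v hv).1 w hw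
  have hc0 : c ≠ 0 := left_ne_zero_of_mul (hc x hwx ▸ hx)
  exact ⟨w, hw, hwx, fun y hy => (hc y hy).trans_ne (mul_ne_zero hc0 hy)⟩

end Span

variable {m s ℓ : ℕ}

def Reveals (m s : ℕ) (v : ZMod m → ZMod 2) (i j : ZMod m) : Prop :=
  j ∉ sideInfo m s i ∧ ∀ x ∉ sideInfo m s i, v x = (Pi.single j 1 : ZMod m → ZMod 2) x

theorem mem_decSet_iff [NeZero m] {G : Fin ℓ → ZMod m → ZMod 2} {i j : ZMod m} :
    j ∈ decSet m s G i ↔ ∃ v ∈ span (ZMod 2) (Set.range G), Reveals m s v i j := by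
  have : {v | ∃ k ∈ sideInfo m s i, v = Pi.single k (1 : ZMod 2)} =
      (fun k => Pi.single k 1) '' sideInfo m s i := by
    ext v
    simp [eq_comm]
  rw [decSet, Set.mem_ofPred_eq, this, span_union, single_mem_sup_span_image_single_iff]
  exact ⟨fun ⟨hj, v, hv, h⟩ => ⟨v, hv, hj, h⟩, fun ⟨v, hv, hj, h⟩ => ⟨hj, v, hv, h⟩⟩

theorem Correct.exists_reveals [NeZero m] {G : Fin ℓ → ZMod m → ZMod 2}
    (hG : Correct m s G) (i : ZMod m) :
    ∃ j, ∃ v ∈ span (ZMod 2) (Set.range G), Reveals m s v i j :=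
  (hG i).imp fun _ => mem_decSet_iff.1

theorem Secure.eq_of_reveals [NeZero m] {G : Fin ℓ → ZMod m → ZMod 2} (hG : Secure m s G)
    {v v' : ZMod m → ZMod 2} (hv : v ∈ span (ZMod 2) (Set.range G))
    (hv' : v' ∈ span (ZMod 2) (Set.range G)) {i j j' : ZMod m}
    (h : Reveals m s v i j) (h' : Reveals m s v' i j') : j = j' :=
  hG i (mem_decSet_iff.2 ⟨v, hv, h⟩) (mem_decSet_iff.2 ⟨v', hv', h'⟩)

theorem Reveals.add_smul {v u : ZMod m → ZMod 2} {i i' j k : ZMod m}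
    (hv : Reveals m s v i j) (hu : Reveals m s u i' k) (hk : k ∈ sideInfo m s i)
    (hsub : sideInfo m s i ⊆ insert k (sideInfo m s i')) (hj : j ∉ sideInfo m s i') :
    Reveals m s (v + v k • u) i' j := by
  refine ⟨hj, fun x hx => ?_⟩
  by_cases hxk : x = k
  · subst hxk
    have hjx : j ≠ x := fun h => hv.1 (h ▸ hk)
    have hux : u x = 1 := by simpa using hu.2 x hu.1
    simp [hux, Pi.single_eq_of_ne' hjx, CharTwo.add_self_eq_zero]
  · have hxA : x ∉ sideInfo m s i := fun h => (Set.mem_insert_iff.1 (hsub h)).elim hxk hx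
    simp [hv.2 x hxA, hu.2 x hx, Pi.single_eq_of_ne hxk]

theorem Reveals.of_support_subset {v w : ZMod m → ZMod 2} {i j : ZMod m}
    (hv : Reveals m s v i j) (hwj : w j ≠ 0) (hw : w.support ⊆ v.support) :
    Reveals m s w i j := by
  refine ⟨hv.1, fun x hx => ?_⟩
  by_cases hxj : x = j
  · subst hxj
    rw [Pi.single_eq_same]
    exact Fin.eq_one_of_ne_zero _ hwj
  · have hvx := hv.2 x hx
    rw [Pi.single_eq_of_ne hxj] at hvx ⊢
    by_contra hwx
    exact hw hwx hvx

theorem self_mem_sideInfo (hs : 0 < s) (i : ZMod m) : i ∈ sideInfo m s i :=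
  ⟨0, mem_range.2 hs, by simp⟩

theorem sideInfo_add_one_subset (i : ZMod m) :
    sideInfo m s (i + 1) ⊆ insert (i + 1) (sideInfo m s i) := by
  rintro x ⟨k, hk, rfl⟩
  cases k with
  | zero => simp
  | succ k => exact Set.mem_insert_of_mem _ ⟨k, by simp at hk ⊢; omega, by push_cast; ring⟩

theorem sideInfo_subset_insert_add_one (i : ZMod m) :
    sideInfo m s i ⊆ insert (i + 1 - s) (sideInfo m s (i + 1)) := by
  rintro x ⟨k, hk, rfl⟩
  by_cases hks : k + 1 = s
  · subst hks
    left
    push_cast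
    ring
  · exact Set.mem_insert_of_mem _ ⟨k + 1, by simp at hk ⊢; omega, by push_cast; ring⟩

theorem mem_sideInfo_add_natCast {a x : ZMod m} {q : ℕ} (hs : s ≤ q + 1) :
    x ∈ sideInfo m s (a + q) ↔ ∃ t, t ≤ q ∧ q < t + s ∧ x = a + t := by
  simp only [sideInfo, Set.mem_ofPred_eq, mem_range]
  constructor
  · rintro ⟨k, hk, rfl⟩
    exact ⟨q - k, by omega, by omega, by rw [Nat.cast_sub (by omega)]; ring⟩
  · rintro ⟨t, h₁, h₂, rfl⟩
    exact ⟨q - t, by omega, by rw [Nat.cast_sub h₁]; ring⟩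

theorem add_natCast_inj {a : ZMod m} {t t' : ℕ} (ht : t < m) (ht' : t' < m) :
    a + t = a + t' ↔ t = t' := by
  rw [add_right_inj, ZMod.natCast_eq_natCast_iff', Nat.mod_eq_of_lt ht, Nat.mod_eq_of_lt ht']

theorem add_natCast_mem_sideInfo_iff {a : ZMod m} {t q : ℕ} (ht : t + s ≤ m) (hq : q < m) :
    a + t ∈ sideInfo m s (a + q) ↔ t ≤ q ∧ q < t + s := by
  simp only [sideInfo, Set.mem_ofPred_eq, mem_range]
  constructor
  · rintro ⟨k, hk, h⟩
    have : a + ((t + k : ℕ) : ZMod m) = a + q := by push_cast; linear_combination h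
    rw [add_natCast_inj (by omega) hq] at this
    omega
  · rintro ⟨h₁, h₂⟩
    exact ⟨q - t, by omega, by rw [Nat.cast_sub h₁]; ring⟩

def offsetVec (a : ZMod m) (P : Finset ℕ) : ZMod m → ZMod 2 :=
  ∑ t ∈ P, Pi.single (a + t) 1

theorem offsetVec_singleton (a : ZMod m) (t : ℕ) : offsetVec a {t} = Pi.single (a + t) 1 :=
  sum_singleton _ _

theorem offsetVec_add (a : ZMod m) (P Q : Finset ℕ) :
    offsetVec a P + offsetVec a Q = offsetVec a (symmDiff P Q) := by
  have h := sum_union_inter (s₁ := P) (s₂ := Q)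
    (f := fun t : ℕ => (Pi.single (a + t) 1 : ZMod m → ZMod 2))
  have hPQ : P ∪ Q = symmDiff P Q ∪ P ∩ Q := (symmDiff_sup_inf P Q).symm
  rw [hPQ, sum_union (s₁ := symmDiff P Q) (s₂ := P ∩ Q) (disjoint_symmDiff_inf P Q), add_assoc,
    CharTwo.add_self_eq_zero, add_zero] at h
  exact h.symm

theorem offsetVec_add_natCast (a : ZMod m) (d : ℕ) (P : Finset ℕ) :
    offsetVec (a + d : ZMod m) P = offsetVec a (P.map (addRightEmbedding d)) := by
  rw [offsetVec, offsetVec, sum_map]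
  exact sum_congr rfl fun t _ => by simp [add_assoc, add_comm (d : ZMod m)]

theorem offsetVec_apply_eq_zero {a x : ZMod m} {P : Finset ℕ} (h : ∀ t ∈ P, x ≠ a + t) :
    offsetVec a P x = 0 := by
  rw [offsetVec, Finset.sum_apply]
  exact sum_eq_zero fun t ht => Pi.single_eq_of_ne (h t ht) _

theorem exists_eq_add_of_offsetVec_ne_zero {a x : ZMod m} {P : Finset ℕ}
    (h : offsetVec a P x ≠ 0) : ∃ t ∈ P, x = a + t := by
  by_contra! h'
  exact h (offsetVec_apply_eq_zero h')

theorem offsetVec_apply_add_natCast {a : ZMod m} {P : Finset ℕ} {t : ℕ}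
    (hP : ∀ u ∈ P, u < m) (ht : t < m) :
    offsetVec a P (a + t) = if t ∈ P then 1 else 0 := by
  rw [offsetVec, Finset.sum_apply]
  simp_rw [Pi.single_apply]
  rw [sum_congr rfl fun u hu => if_congr (add_natCast_inj ht (hP u hu)) rfl rfl, sum_ite_eq]

theorem eq_offsetVec_of_support {v : ZMod m → ZMod 2} {a : ZMod m} {n : ℕ} (hn : n ≤ m)
    (hv : ∀ x, v x ≠ 0 → ∃ t < n, x = a + t) :
    v = offsetVec a ((range n).filter fun t => v (a + t) ≠ 0) := by
  funext x
  by_cases hx : v x = 0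
  · rw [hx, offsetVec_apply_eq_zero]
    rintro t ht rfl
    exact (mem_filter.1 ht).2 hx
  · obtain ⟨t, ht, rfl⟩ := hv x hx
    rw [offsetVec_apply_add_natCast (fun u hu => by have := mem_range.1 (mem_filter.1 hu).1; omega)
      (by omega), if_pos (mem_filter.2 ⟨mem_range.2 ht, hx⟩)]
    exact Fin.eq_one_of_ne_zero _ hx

/-- `Reveals` for `offsetVec a P` and the user `a + q` (see `reveals_offsetVec_iff`), stated on
`ℕ` so that finite configurations can be checked by `decide`. -/
def OffsetReveals (s q p : ℕ) (P : Finset ℕ) : Prop :=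
  ¬(p ≤ q ∧ q < p + s) ∧ p ∈ P ∧ ∀ t ∈ P, t ≠ p → t ≤ q ∧ q < t + s

instance (s q p : ℕ) (P : Finset ℕ) : Decidable (OffsetReveals s q p P) :=
  inferInstanceAs (Decidable (_ ∧ _))

theorem OffsetReveals.eq_sub_two_or_eq_three {k q p : ℕ} (hk : k ∈ ({2, 3} : Finset ℕ))
    (h : OffsetReveals 3 q p (range k)) : q = k - 2 ∨ q = 3 := by
  have hk3 : 2 ≤ k ∧ k ≤ 3 := by simp at hk; omega
  have hp := mem_range.1 h.2.1
  have hq : q < 4 := by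
    obtain ⟨t, ht, htp⟩ : ∃ t < 2, t ≠ p :=
      ⟨if p = 0 then 1 else 0, by split_ifs <;> omega, by split_ifs <;> omega⟩
    have := h.2.2 t (mem_range.2 (by omega)) htp
    omega
  have hcases : ∀ k ∈ ({2, 3} : Finset ℕ), ∀ q < 4, ∀ p < 3, OffsetReveals 3 q p (range k) →
      q = k - 2 ∨ q = 3 := by decide
  exact hcases k hk q hq p (by omega) h

theorem reveals_offsetVec_iff {a : ZMod m} {P : Finset ℕ} {q p : ℕ} (hs : 0 < s)
    (hP : ∀ t ∈ P, t + s ≤ m) (hp : p + s ≤ m) (hq : q < m) :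
    Reveals m s (offsetVec a P) (a + q) (a + p) ↔ OffsetReveals s q p P := by
  have hval : ∀ t, t + s ≤ m → offsetVec a P (a + t) = if t ∈ P then 1 else 0 :=
    fun t ht => offsetVec_apply_add_natCast (fun u hu => by have := hP u hu; omega) (by omega)
  have hne : ∀ t ∈ P, t ≠ p → a + (t : ZMod m) ≠ a + p := fun t ht htp h =>
    htp ((add_natCast_inj (by have := hP t ht; omega) (by omega)).1 h)
  simp only [Reveals, OffsetReveals, add_natCast_mem_sideInfo_iff hp hq]
  constructor
  · rintro ⟨hpA, h⟩
    have hpP : p ∈ P := by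
      by_contra hpP
      simpa [hval p hp, hpP] using h (a + p) (by rwa [add_natCast_mem_sideInfo_iff hp hq])
    refine ⟨hpA, hpP, fun t ht htp => ?_⟩
    by_contra htA
    have := h (a + t) (by rwa [add_natCast_mem_sideInfo_iff (hP t ht) hq])
    rw [hval t (hP t ht), if_pos ht, Pi.single_eq_of_ne (hne t ht htp)] at this
    exact one_ne_zero this
  · rintro ⟨hpA, hpP, h⟩
    refine ⟨hpA, fun x hx => ?_⟩
    by_cases hxP : ∃ t ∈ P, x = a + t
    · obtain ⟨t, ht, rfl⟩ := hxP
      obtain rfl : t = p := by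
        by_contra htp
        exact hx ((add_natCast_mem_sideInfo_iff (hP t ht) hq).2 (h t ht htp))
      rw [hval t (hP t ht), if_pos ht, Pi.single_eq_same]
    · push Not at hxP
      rw [offsetVec_apply_eq_zero hxP, Pi.single_eq_of_ne (hxP p hpP)]

theorem Reveals.exists_offsetVec {v : ZMod m → ZMod 2} {a : ZMod m} {q p n : ℕ} (hs : 0 < s)
    (hsq : s ≤ q + 1) (hqn : q < n) (hpn : p < n) (hn : n + s ≤ m)
    (h : Reveals m s v (a + q) (a + p)) :
    ∃ P ⊆ range n, v = offsetVec a P ∧ OffsetReveals s q p P := by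
  have hv := eq_offsetVec_of_support (v := v) (a := a) (n := n) (by omega) fun x hx => by
    by_cases hxA : x ∈ sideInfo m s (a + q)
    · obtain ⟨t, ht, -, rfl⟩ := (mem_sideInfo_add_natCast hsq).1 hxA
      exact ⟨t, by omega, rfl⟩
    · rw [h.2 x hxA] at hx
      exact ⟨p, hpn, by_contra fun hxp => hx (Pi.single_eq_of_ne hxp _)⟩
  refine ⟨_, filter_subset _ _, hv, (reveals_offsetVec_iff hs ?_ (by omega) (by omega)).1 (hv ▸ h)⟩
  intro t ht
  have := mem_range.1 (mem_filter.1 ht).1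
  omega

/-- The bounds `q < 7` and `R ⊆ range 5` keep the offsets distinct and the windows undistorted
in every `ZMod m` with `7 ≤ m`. -/
def Clash (P Q : Finset ℕ) : Prop :=
  ∃ q < 7, ∃ R₁ ∈ [P, Q, symmDiff P Q], ∃ R₂ ∈ [P, Q, symmDiff P Q],
    R₁ ⊆ range 5 ∧ R₂ ⊆ range 5 ∧
    ∃ p₁ ∈ R₁, ∃ p₂ ∈ R₂, p₁ ≠ p₂ ∧ OffsetReveals 3 q p₁ R₁ ∧ OffsetReveals 3 q p₂ R₂

instance (P Q : Finset ℕ) : Decidable (Clash P Q) :=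
  inferInstanceAs (Decidable (∃ q < 7, _))

section Structure

variable [NeZero m] {G : Fin ℓ → ZMod m → ZMod 2}

theorem false_of_clash (hm : 7 ≤ m) (hSec : Secure m 3 G) {a : ZMod m} {P Q : Finset ℕ}
    (hP : offsetVec a P ∈ span (ZMod 2) (Set.range G))
    (hQ : offsetVec a Q ∈ span (ZMod 2) (Set.range G)) (h : Clash P Q) : False := by
  obtain ⟨q, hq, R₁, hR₁, R₂, hR₂, hb₁, hb₂, p₁, hp₁, p₂, hp₂, hne, h₁, h₂⟩ := h
  have hmem : ∀ R ∈ [P, Q, symmDiff P Q], offsetVec a R ∈ span (ZMod 2) (Set.range G) := by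
    simp only [List.mem_cons, List.not_mem_nil, or_false]
    rintro R (rfl | rfl | rfl)
    exacts [hP, hQ, offsetVec_add a P Q ▸ add_mem hP hQ]
  have hrev : ∀ R ⊆ range 5, ∀ p ∈ R, OffsetReveals 3 q p R →
      Reveals m 3 (offsetVec a R) (a + q) (a + p) := fun R hR p hp h =>
    (reveals_offsetVec_iff (by norm_num) (fun t ht => by have := mem_range.1 (hR ht); omega)
      (by have := mem_range.1 (hR hp); omega) (by omega)).2 h
  have := hSec.eq_of_reveals (hmem R₁ hR₁) (hmem R₂ hR₂) (hrev R₁ hb₁ p₁ hp₁ h₁)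
    (hrev R₂ hb₂ p₂ hp₂ h₂)
  exact hne ((add_natCast_inj (by have := mem_range.1 (hb₁ hp₁); omega)
    (by have := mem_range.1 (hb₂ hp₂); omega)).1 this)

theorem single_notMem_span (hm : 7 ≤ m) (hCor : Correct m 3 G) (hSec : Secure m 3 G)
    (b : ZMod m) : Pi.single b 1 ∉ span (ZMod 2) (Set.range G) := by
  intro hb
  obtain ⟨a, rfl⟩ : ∃ a : ZMod m, b = a + (3 : ℕ) := ⟨b - 3, by push_cast; ring⟩
  have h3 : a + (2 : ℕ) + 1 = a + (3 : ℕ) := by push_cast; ring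
  have h0 : a + (2 : ℕ) + 1 - (3 : ℕ) = a + (0 : ℕ) := by push_cast; ring
  rw [← offsetVec_singleton] at hb
  obtain ⟨j, v, hv, hvj⟩ := hCor.exists_reveals (a + (3 : ℕ))
  by_cases hj : j = a + (0 : ℕ)
  · subst hj
    obtain ⟨P, hP, rfl, hPr⟩ :=
      hvj.exists_offsetVec (n := 4) (by norm_num) (by norm_num) (by norm_num) (by norm_num) hm
    have hclash : ∀ P ∈ (range 4).powerset, OffsetReveals 3 3 0 P → Clash P {3} := by decide
    exact false_of_clash hm hSec hv hb (hclash P (mem_powerset.2 hP) hPr)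
  · have hu : Reveals m 3 (offsetVec a {3}) (a + (2 : ℕ)) (a + (3 : ℕ)) :=
      (reveals_offsetVec_iff (by norm_num) (by simp; omega) (by omega) (by omega)).2 (by decide)
    have hsub := sideInfo_add_one_subset (s := 3) (a + ((2 : ℕ) : ZMod m))
    rw [h3] at hsub
    have hj' : j ∉ sideInfo m 3 (a + (2 : ℕ)) := fun hjA => by
      rcases sideInfo_subset_insert_add_one _ hjA with h | h
      · exact hj (h.trans h0)
      · exact hvj.1 (h3 ▸ h)
    have hk := self_mem_sideInfo (m := m) (by norm_num : 0 < 3) (a + (3 : ℕ))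
    have := hSec.eq_of_reveals (add_mem hv (Submodule.smul_mem _ _ hb)) hb
      (hvj.add_smul hu hk hsub hj') hu
    exact hvj.1 (this ▸ hk)

theorem offsetVec_zero_two_notMem_span (hm : 7 ≤ m) (hCor : Correct m 3 G)
    (hSec : Secure m 3 G) (a : ZMod m) : offsetVec a {0, 2} ∉ span (ZMod 2) (Set.range G) := by
  intro hu
  have h3 : a + (2 : ℕ) + 1 = a + (3 : ℕ) := by push_cast; ring
  have h0 : a + (2 : ℕ) + 1 - (3 : ℕ) = a + (0 : ℕ) := by push_cast; ring
  obtain ⟨j, v, hv, hvj⟩ := hCor.exists_reveals (a + (2 : ℕ))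
  by_cases hj : j = a + (3 : ℕ)
  · subst hj
    obtain ⟨P, hP, rfl, hPr⟩ :=
      hvj.exists_offsetVec (n := 4) (by norm_num) (by norm_num) (by norm_num) (by norm_num) hm
    have hclash : ∀ P ∈ (range 4).powerset, OffsetReveals 3 2 3 P → Clash P {0, 2} := by decide
    exact false_of_clash hm hSec hv hu (hclash P (mem_powerset.2 hP) hPr)
  · have hu' : Reveals m 3 (offsetVec a {0, 2}) (a + (3 : ℕ)) (a + (0 : ℕ)) :=
      (reveals_offsetVec_iff (by norm_num) (by simp; omega) (by omega) (by omega)).2 (by decide)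
    have hk : a + (0 : ℕ) ∈ sideInfo m 3 (a + (2 : ℕ)) :=
      (add_natCast_mem_sideInfo_iff (by omega) (by omega)).2 (by norm_num)
    have hsub := sideInfo_subset_insert_add_one (s := 3) (a + ((2 : ℕ) : ZMod m))
    rw [h0, h3] at hsub
    have hj' : j ∉ sideInfo m 3 (a + (3 : ℕ)) := fun hjA => by
      rcases sideInfo_add_one_subset _ (h3 ▸ hjA) with h | h
      · exact hj (h.trans h3)
      · exact hvj.1 h
    have := hSec.eq_of_reveals (add_mem hv (Submodule.smul_mem _ _ hu)) hu
      (hvj.add_smul hu' hk hsub hj') hu'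
    exact hvj.1 (this ▸ hk)

open Classical in
noncomputable def blocks (G : Fin ℓ → ZMod m → ZMod 2) : Finset (ZMod m × ℕ) :=
  (univ ×ˢ {2, 3}).filter fun b => offsetVec b.1 (range b.2) ∈ span (ZMod 2) (Set.range G)

theorem mem_blocks {b : ZMod m × ℕ} :
    b ∈ blocks G ↔
      b.2 ∈ ({2, 3} : Finset ℕ) ∧ offsetVec b.1 (range b.2) ∈ span (ZMod 2) (Set.range G) := by
  simp [blocks]

theorem exists_mem_blocks_of_support_subset (hm : 7 ≤ m) (hCor : Correct m 3 G)
    (hSec : Secure m 3 G) {w : ZMod m → ZMod 2} (hw : w ∈ span (ZMod 2) (Set.range G))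
    (hw0 : w ≠ 0) {i : ZMod m} (hsupp : w.support ⊆ sideInfo m 3 i) :
    ∃ b ∈ blocks G, w = offsetVec b.1 (range b.2) := by
  obtain ⟨a, rfl⟩ : ∃ a : ZMod m, i = a + (2 : ℕ) := ⟨i - 2, by push_cast; ring⟩
  obtain ⟨P, hP, rfl⟩ : ∃ P ⊆ range 3, w = offsetVec a P :=
    ⟨_, filter_subset _ _, eq_offsetVec_of_support (by omega) fun x hx => by
      obtain ⟨t, ht, -, rfl⟩ := (mem_sideInfo_add_natCast (by norm_num)).1 (hsupp hx)
      exact ⟨t, by omega, rfl⟩⟩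
  have hshape : ∀ P ∈ (range 3).powerset, P = ∅ ∨ (∃ t ∈ range 3, P = {t}) ∨ P = {0, 2} ∨
      ∃ d ∈ range 2, ∃ k ∈ ({2, 3} : Finset ℕ), P = (range k).map (addRightEmbedding d) := by
    decide
  rcases hshape P (mem_powerset.2 hP) with rfl | ⟨t, -, rfl⟩ | rfl | ⟨d, -, k, hk, rfl⟩
  · exact absurd sum_empty hw0
  · exact absurd hw (offsetVec_singleton a t ▸ single_notMem_span hm hCor hSec _)
  · exact absurd hw (offsetVec_zero_two_notMem_span hm hCor hSec a)
  · rw [← offsetVec_add_natCast] at hw ⊢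
    exact ⟨(a + d, k), mem_blocks.2 ⟨hk, hw⟩, rfl⟩

theorem eq_of_mem_blocks_of_add_eq (hm : 7 ≤ m) (hSec : Secure m 3 G) {b b' : ZMod m × ℕ}
    (hb : b ∈ blocks G) (hb' : b' ∈ blocks G) {t t' : ℕ} (ht : t < b.2) (ht' : t' < b'.2)
    (h : b.1 + t = b'.1 + t') : b = b' := by
  wlog htt : t' ≤ t generalizing b b' t t'
  · exact (this hb' hb ht' ht h.symm (by omega)).symm
  obtain ⟨c, k⟩ := b
  obtain ⟨c', k'⟩ := b'
  obtain ⟨hk, hV⟩ := mem_blocks.1 hb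
  obtain ⟨hk', hV'⟩ := mem_blocks.1 hb'
  have hc' : c' = c + ((t - t' : ℕ) : ZMod m) := by
    rw [Nat.cast_sub htt]
    linear_combination -h
  have hclash : ∀ k ∈ ({2, 3} : Finset ℕ), ∀ k' ∈ ({2, 3} : Finset ℕ), ∀ d < k,
      (d = 0 → k ≠ k') → Clash (range k) ((range k').map (addRightEmbedding d)) := by
    decide
  by_contra hne
  rw [hc', offsetVec_add_natCast] at hV'
  refine false_of_clash hm hSec hV hV' (hclash k hk k' hk' (t - t') (by omega) fun h0 hkk => ?_)
  exact hne (Prod.ext (by simp [hc', h0]) hkk)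

theorem exists_mem_blocks_serving (hm : 7 ≤ m) (hG : IsDecentralizedCode m 3 G)
    (hCor : Correct m 3 G) (hSec : Secure m 3 G) (i : ZMod m) :
    ∃ b ∈ blocks G, i = b.1 + (b.2 - 2 : ℕ) ∨ i = b.1 + (3 : ℕ) := by
  have hrow : ∀ w ∈ Set.range G \ {0}, ∃ b ∈ blocks G, w = offsetVec b.1 (range b.2) := by
    rintro _ ⟨⟨t, rfl⟩, h0⟩
    obtain ⟨i₀, hi₀⟩ := hG t
    exact exists_mem_blocks_of_support_subset hm hCor hSec (subset_span ⟨t, rfl⟩) h0 hi₀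
  have hdisj : (Set.range G \ {0}).Pairwise fun w w' => Disjoint w.support w'.support := by
    intro w hw w' hw' hne
    obtain ⟨b, hb, rfl⟩ := hrow w hw
    obtain ⟨b', hb', rfl⟩ := hrow w' hw'
    refine Set.disjoint_left.2 fun x hx hx' => hne ?_
    obtain ⟨t, ht, rfl⟩ := exists_eq_add_of_offsetVec_ne_zero hx
    obtain ⟨t', ht', h⟩ := exists_eq_add_of_offsetVec_ne_zero hx'
    rw [eq_of_mem_blocks_of_add_eq hm hSec hb hb' (mem_range.1 ht) (mem_range.1 ht') h]
  obtain ⟨j, v, hv, hvj⟩ := hCor.exists_reveals i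
  have hvj0 : v j ≠ 0 := by
    rw [hvj.2 j hvj.1, Pi.single_eq_same]
    exact one_ne_zero
  rw [← span_sdiff_singleton_zero] at hv
  obtain ⟨w, hw, hwj, hwv⟩ := exists_mem_support_subset_of_mem_span hdisj hv hvj0
  obtain ⟨⟨c, k⟩, hb, rfl⟩ := hrow w hw
  have hrev := hvj.of_support_subset hwj hwv
  obtain ⟨p, hp, rfl⟩ := exists_eq_add_of_offsetVec_ne_zero hwj
  obtain ⟨q, hq, rfl⟩ : ∃ q < m, i = c + q :=
    ⟨(i - c).val, ZMod.val_lt _, by rw [ZMod.natCast_zmod_val]; ring⟩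
  have hk := (mem_blocks.1 hb).1
  have hk3 : k ≤ 3 := by simp at hk; omega
  rw [reveals_offsetVec_iff (by norm_num) (fun t ht => by have := mem_range.1 ht; omega)
    (by have := mem_range.1 hp; omega) hq] at hrev
  obtain rfl | rfl := hrev.eq_sub_two_or_eq_three hk
  exacts [⟨_, hb, Or.inl rfl⟩, ⟨_, hb, Or.inr rfl⟩]

theorem two_mul_card_blocks_le (hm : 7 ≤ m) (hSec : Secure m 3 G) : 2 * #(blocks G) ≤ m := by
  have := card_le_card_of_injOn (s := blocks G ×ˢ range 2) (t := univ)
    (fun b => b.1.1 + (b.2 : ZMod m)) (fun _ _ => mem_coe.2 (mem_univ _)) ?_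
  · rwa [card_product, card_range, card_univ, ZMod.card, mul_comm] at this
  rintro ⟨b, e⟩ he ⟨b', e'⟩ he' h
  simp only [coe_product, Set.mem_prod, mem_coe, mem_range] at he he' h
  have hk : 2 ≤ b.2 := by have := (mem_blocks.1 he.1).1; simp at this; omega
  have hk' : 2 ≤ b'.2 := by have := (mem_blocks.1 he'.1).1; simp at this; omega
  obtain rfl := eq_of_mem_blocks_of_add_eq hm hSec he.1 he'.1 (by omega) (by omega) h
  rw [add_natCast_inj (by omega) (by omega)] at h
  rw [h]

theorem le_two_mul_card_blocks (hm : 7 ≤ m) (hG : IsDecentralizedCode m 3 G)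
    (hCor : Correct m 3 G) (hSec : Secure m 3 G) : m ≤ 2 * #(blocks G) := by
  have := card_le_card_of_surjOn (s := blocks G ×ˢ range 2) (t := univ)
    (fun b => b.1.1 + ((if b.2 = 0 then b.1.2 - 2 else 3 : ℕ) : ZMod m)) ?_
  · rwa [card_product, card_range, card_univ, ZMod.card, mul_comm] at this
  intro i _
  obtain ⟨b, hb, hi | hi⟩ := exists_mem_blocks_serving hm hG hCor hSec i
  · exact ⟨(b, 0), by simp [hb], by simp [hi]⟩
  · exact ⟨(b, 1), by simp [hb], by simp [hi]⟩

end Structure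

end SDPicod

theorem infeasible_s_eq_three_odd (m : ℕ) (hm : 7 ≤ m) (hodd : Odd m)
    (ℓ : ℕ) (G : Fin ℓ → ZMod m → ZMod 2)
    (hG : IsDecentralizedCode m 3 G) :
    ¬ (Correct m 3 G ∧ Secure m 3 G) := by
  rintro ⟨hCor, hSec⟩
  have : NeZero m := ⟨by omega⟩
  have h₁ := two_mul_card_blocks_le hm hSec
  have h₂ := le_two_mul_card_blocks hm hG hCor hSec
  exact Nat.not_even_iff_odd.2 hodd ⟨#(blocks G), by omega⟩
end

section
/- For every odd integer m ≥ 5 the (m, m−2) secure decentralized pliable index coding problem with circular side information is not linearly feasible: for every length ℓ and every decentralized linear code G of length ℓ for parameters (m, s = m − 2), G is not simultaneously correct and secure. -/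
section LinearAlgebra

variable {K ι : Type*} [DecidableEq ι]

theorem Pi.single_one_notMem_span_of_forall_apply_eq_zero [Semiring K] [Nontrivial K]
    {S : Set (ι → K)} {a : ι} (hS : ∀ w ∈ S, w a = 0) :
    Pi.single a 1 ∉ Submodule.span K S := fun h => by
  have hle : Submodule.span K S ≤ LinearMap.ker (LinearMap.proj a : (ι → K) →ₗ[K] K) :=
    Submodule.span_le.2 hS
  simpa using hle h

theorem Pi.single_one_mem_of_apply_ne_zero [Field K] [Fintype ι] {V : Submodule K (ι → K)}
    {v : ι → K} (hv : v ∈ V) {b : ι} (hb : v b ≠ 0) (hV : ∀ j ≠ b, Pi.single j 1 ∈ V) :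
    Pi.single b 1 ∈ V := by
  have hsplit : Pi.single b (v b) = v - ∑ j ∈ Finset.univ.erase b, Pi.single j (v j) := by
    rw [eq_sub_iff_add_eq', Finset.sum_erase_add _ _ (Finset.mem_univ b),
      Finset.univ_sum_single]
  have hsingle : Pi.single b (v b) ∈ V := by
    refine hsplit ▸ V.sub_mem hv (V.sum_mem fun j hj => ?_)
    simpa [← Pi.single_smul] using V.smul_mem (v j) (hV j (Finset.ne_of_mem_erase hj))
  simpa [← Pi.single_smul, hb] using V.smul_mem (v b)⁻¹ hsingle

end LinearAlgebra

theorem even_of_forall_iff_not_add_one {m : ℕ} {P : ZMod m → Prop}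
    (h : ∀ j, P j ↔ ¬ P (j + 1)) : Even m := by
  have key (n : ℕ) : (P n ↔ P 0) ↔ Even n := by
    induction n with
    | zero => simp
    | succ n ih =>
      rw [Nat.cast_succ, Nat.even_add_one, ← ih, h n]
      tauto
  simpa using key m

namespace SDPicod

variable {m s ℓ : ℕ} {G : Fin ℓ → ZMod m → ZMod 2} {i a b : ZMod m}

theorem mem_sideInfo_iff_val_sub_lt [NeZero m] (hs : s ≤ m) {j : ZMod m} :
    j ∈ sideInfo m s i ↔ (i - j).val < s := by
  constructor
  · rintro ⟨k, hk, rfl⟩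
    rw [Finset.mem_range] at hk
    rwa [sub_sub_cancel, ZMod.val_natCast_of_lt (by omega)]
  · intro h
    exact ⟨(i - j).val, Finset.mem_range.2 h, by rw [ZMod.natCast_zmod_val, sub_sub_cancel]⟩

theorem notMem_sideInfo_sub_two_iff (hm : 2 ≤ m) {j : ZMod m} :
    j ∉ sideInfo m (m - 2) i ↔ j = i + 1 ∨ j = i + 2 := by
  have : NeZero m := ⟨by omega⟩
  have hval (n : ℕ) (hn : n < m) (x : ZMod m) : x.val = n ↔ x = n := by
    rw [← (ZMod.val_injective m).eq_iff, ZMod.val_natCast_of_lt hn]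
  have hcast (n : ℕ) (hn : n ≤ m) : ((m - n : ℕ) : ZMod m) = -n := by
    rw [Nat.cast_sub hn, ZMod.natCast_self, zero_sub]
  have hrange : m - 2 ≤ (i - j).val ↔ (i - j).val = m - 1 ∨ (i - j).val = m - 2 := by
    have := ZMod.val_lt (i - j)
    omega
  rw [mem_sideInfo_iff_val_sub_lt (by omega), not_lt, hrange, hval _ (by omega),
    hval _ (by omega), hcast 1 (by omega), hcast 2 (by omega)]
  push_cast
  refine or_congr ⟨fun h => ?_, fun h => ?_⟩ ⟨fun h => ?_, fun h => ?_⟩ <;>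
    linear_combination -h

theorem exists_apply_ne_zero_of_mem_decSet {j : ZMod m} (hj : j ∈ decSet m s G i) :
    ∃ t, G t j ≠ 0 := by
  by_contra! hcol
  refine Pi.single_one_notMem_span_of_forall_apply_eq_zero ?_ hj.2
  rintro w (⟨t, rfl⟩ | ⟨k, hk, rfl⟩)
  · exact hcol t
  · exact Pi.single_eq_of_ne (fun h : j = k => hj.1 (h ▸ hk)) 1

section TwoMissing

variable [NeZero m] (hmiss : ∀ j, j ∉ sideInfo m s i ↔ j = a ∨ j = b)
include hmiss

theorem mem_decSet_of_apply_ne_zero (ha : a ∈ decSet m s G i) {t : Fin ℓ} (hb : G t b ≠ 0) :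
    b ∈ decSet m s G i := by
  refine ⟨(hmiss b).2 (Or.inr rfl),
    Pi.single_one_mem_of_apply_ne_zero (Submodule.subset_span (Or.inl ⟨t, rfl⟩)) hb
      fun j hjb => ?_⟩
  by_cases hj : j ∈ sideInfo m s i
  · exact Submodule.subset_span (Or.inr ⟨j, hj, rfl⟩)
  · obtain rfl | rfl := (hmiss j).1 hj
    exacts [ha.2, absurd rfl hjb]

theorem apply_eq_zero_of_mem_decSet (hab : a ≠ b) (hsec : (decSet m s G i).Subsingleton)
    (ha : a ∈ decSet m s G i) (t : Fin ℓ) : G t b = 0 := by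
  by_contra hb
  exact hab (hsec ha (mem_decSet_of_apply_ne_zero hmiss ha hb))

theorem forall_apply_eq_zero_iff_not_forall_apply_eq_zero (hab : a ≠ b)
    (hcor : (decSet m s G i).Nonempty) (hsec : (decSet m s G i).Subsingleton) :
    (∀ t, G t a = 0) ↔ ¬ ∀ t, G t b = 0 := by
  have hmiss' (j : ZMod m) : j ∉ sideInfo m s i ↔ j = b ∨ j = a := (hmiss j).trans or_comm
  obtain ⟨j, hj⟩ := hcor
  obtain rfl | rfl := (hmiss j).1 hj.1
  · obtain ⟨t, ht⟩ := exists_apply_ne_zero_of_mem_decSet hj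
    exact iff_of_false (fun h => ht (h t))
      (not_not.2 (apply_eq_zero_of_mem_decSet hmiss hab hsec hj))
  · obtain ⟨t, ht⟩ := exists_apply_ne_zero_of_mem_decSet hj
    exact iff_of_true (apply_eq_zero_of_mem_decSet hmiss' hab.symm hsec hj) fun h => ht (h t)

end TwoMissing

end SDPicod

open SDPicod

theorem infeasible_s_eq_m_sub_two_odd_general (m : ℕ) (hm : 5 ≤ m) (hodd : Odd m)
    (ℓ : ℕ) (G : Fin ℓ → ZMod m → ZMod 2) :
    ¬ (Correct m (m - 2) G ∧ Secure m (m - 2) G) := by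
  rintro ⟨hcor, hsec⟩
  have : Fact (1 < m) := ⟨by omega⟩
  have hne (i : ZMod m) : i + 1 ≠ i + 2 := fun h => one_ne_zero (by linear_combination h.symm)
  have halt (j : ZMod m) : (∀ t, G t j = 0) ↔ ¬ ∀ t, G t (j + 1) = 0 := by
    have := forall_apply_eq_zero_iff_not_forall_apply_eq_zero
      (fun _ => notMem_sideInfo_sub_two_iff (by omega)) (hne (j - 1)) (hcor (j - 1)) (hsec (j - 1))
    rwa [sub_add_cancel, show j - 1 + 2 = j + 1 by ring] at this
  exact Nat.not_even_iff_odd.2 hodd (even_of_forall_iff_not_add_one halt)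

theorem infeasible_s_eq_m_sub_two_odd (m : ℕ) (hm : 5 ≤ m) (hodd : Odd m)
    (ℓ : ℕ) (G : Fin ℓ → ZMod m → ZMod 2)
    (hG : IsDecentralizedCode m (m - 2) G) :
    ¬ (Correct m (m - 2) G ∧ Secure m (m - 2) G) :=
  infeasible_s_eq_m_sub_two_odd_general m hm hodd ℓ G
end

section
/- For all integers m, s with s ≥ 5, m ≥ 4s and 2s dividing m, there exists a decentralized linear code of length ℓ = 3·m/(2·s) for parameters (m, s) that is both correct and secure. -/
/-!
Every row of the code is a weight-two vector `e a + e (a + d)` with `d < s`, so user `a + d` can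
send it, and different rows have disjoint supports. For such a code user `i` decodes `j ∉ A_i`
exactly when a row joins `j` to an index of `A_i`: otherwise the parity check summing the
coordinates of `j` and of its row partner (or of `j` alone) vanishes on every generator of the
span but not on `e j`. Since `d < s`, a row joins the window `A_i = (i - s, i]` to its outside
across the top iff `i ∈ [a, a + d)`, and across the bottom iff `i - s ∈ [a, a + d)`.

Cut `ZMod m` into `m / (2 * s)` blocks of length `2 * s` and take the rows `{0, 1}`, `{2, s}`,
`{s + 1, s + 2}` in every block. The intervals `[a, a + d)` then cover exactly the residues
`{0} ∪ [2, s) ∪ {s + 1}` modulo `2 * s`, which contain exactly one of `ρ` and `ρ + s` for every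
`ρ`. So exactly one row crosses the boundary of each window, and every user decodes exactly one
message.
-/

theorem Nat.mul_add_le_and_lt_iff {n k a d v : ℕ} (h : a + d ≤ n) :
    n * k + a ≤ v ∧ v < n * k + a + d ↔ v / n = k ∧ a ≤ v % n ∧ v % n < a + d := by
  have hv := Nat.div_add_mod v n
  constructor
  · rintro ⟨h₁, h₂⟩
    have hk : v / n = k := Nat.div_eq_of_lt_le (by linarith) (by rw [add_mul]; linarith)
    rw [hk] at hv
    exact ⟨hk, by omega, by omega⟩
  · rintro ⟨rfl, h₁, h₂⟩
    omega

namespace SDPicod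

open Function Submodule

section ParityCheck

variable {ι α R : Type*}

theorem sum_apply_eq_zero_of_mem_span [CommRing R] {T : Set (α → R)} {S : Finset α}
    (hT : ∀ v ∈ T, ∑ x ∈ S, v x = 0) {v : α → R} (hv : v ∈ span R T) :
    ∑ x ∈ S, v x = 0 := by
  induction hv using Submodule.span_induction with
  | mem v hv => exact hT v hv
  | zero => simp
  | add v w _ _ hv hw => simp only [Pi.add_apply, Finset.sum_add_distrib, hv, hw, add_zero]
  | smul c v _ hv => simp only [Pi.smul_apply, smul_eq_mul, ← Finset.mul_sum, hv, mul_zero]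

theorem single_notMem_span_of_sum_eq_zero [DecidableEq α] [CommRing R] [Nontrivial R]
    {G : ι → α → R} {A : Set α} {j : α} {S : Finset α} (hjS : j ∈ S) (hSA : ∀ x ∈ S, x ∉ A)
    (hG : ∀ t, ∑ x ∈ S, G t x = 0) :
    Pi.single j 1 ∉ span R (Set.range G ∪ {v | ∃ k ∈ A, v = Pi.single k 1}) := by
  intro hj
  have hgen : ∀ v ∈ Set.range G ∪ {v | ∃ k ∈ A, v = Pi.single k 1}, ∑ x ∈ S, v x = 0 := by
    rintro v (⟨t, rfl⟩ | ⟨k, hk, rfl⟩)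
    · exact hG t
    · rw [Finset.sum_pi_single', if_neg fun hkS => hSA k hkS hk]
  simpa [Finset.sum_pi_single', hjS] using sum_apply_eq_zero_of_mem_span hgen hj

def pairCode [DecidableEq α] (a b : ι → α) : ι → α → ZMod 2 :=
  fun t => Pi.single (a t) 1 + Pi.single (b t) 1

theorem single_mem_span_pairCode_iff [DecidableEq α] {a b : ι → α}
    (hab : Injective (Sum.elim a b)) {A : Set α} {j : α} (hj : j ∉ A) :
    Pi.single j 1 ∈
        span (ZMod 2) (Set.range (pairCode a b) ∪ {v | ∃ k ∈ A, v = Pi.single k 1}) ↔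
      ∃ t, a t = j ∧ b t ∈ A ∨ b t = j ∧ a t ∈ A := by
  classical
  have ha : Injective a := hab.comp Sum.inl_injective
  have hb : Injective b := hab.comp Sum.inr_injective
  have hne : ∀ t t', a t ≠ b t' := fun t t' h => Sum.inl_ne_inr (hab h)
  constructor
  · contrapose!
    intro hA
    by_cases hend : ∃ t, a t = j ∨ b t = j
    · obtain ⟨t, ht⟩ := hend
      refine single_notMem_span_of_sum_eq_zero (S := {a t, b t}) ?_ ?_ fun t' => ?_
      · rcases ht with rfl | rfl <;> simp
      · have := hA t
        simp only [Finset.mem_insert, Finset.mem_singleton]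
        rintro x (rfl | rfl) <;> rcases ht with rfl | rfl <;> tauto
      · have hmem : ∀ x, x = a t' ∨ x = b t' → (x ∈ ({a t, b t} : Finset α) ↔ t' = t) := by
          rintro x (rfl | rfl) <;>
            simp [ha.eq_iff, hb.eq_iff, hne, (hne _ _).symm, eq_comm]
        simp only [pairCode, Pi.add_apply, Finset.sum_add_distrib, Finset.sum_pi_single']
        rw [if_congr (hmem _ (Or.inl rfl)) rfl rfl, if_congr (hmem _ (Or.inr rfl)) rfl rfl]
        split_ifs <;> decide
    · simp only [not_exists, not_or] at hend
      refine single_notMem_span_of_sum_eq_zero (S := {j}) (Finset.mem_singleton_self j)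
        (by simpa using hj) fun t => ?_
      simp [pairCode, Pi.single_apply, Ne.symm (hend t).1, Ne.symm (hend t).2]
  · have hrow : ∀ t, pairCode a b t ∈ span (ZMod 2)
        (Set.range (pairCode a b) ∪ {v | ∃ k ∈ A, v = Pi.single k 1}) :=
      fun t => subset_span (Or.inl ⟨t, rfl⟩)
    have hside : ∀ k ∈ A, Pi.single k 1 ∈ span (ZMod 2)
        (Set.range (pairCode a b) ∪ {v | ∃ k ∈ A, v = Pi.single k 1}) :=
      fun k hk => subset_span (Or.inr ⟨k, hk, rfl⟩)
    rintro ⟨t, ⟨rfl, hbA⟩ | ⟨rfl, haA⟩⟩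
    · simpa [pairCode] using sub_mem (hrow t) (hside _ hbA)
    · simpa [pairCode] using sub_mem (hrow t) (hside _ haA)

end ParityCheck

section Window

variable {m s : ℕ}

theorem val_sub_natCast_of_le [NeZero m] {y : ZMod m} {n : ℕ} (h : n ≤ y.val) :
    (y - n).val = y.val - n := by
  have hn : (n : ZMod m).val = n := ZMod.val_natCast_of_lt (h.trans_lt (ZMod.val_lt y))
  rw [ZMod.val_sub (hn.symm ▸ h), hn]

theorem val_sub_natCast_of_lt {y : ZMod m} {n : ℕ} (h : y.val < n) (hn : n ≤ m) :
    (y - n).val = y.val + m - n := by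
  have hcast : y - n = y + ((m - n : ℕ) : ZMod m) := by
    rw [Nat.cast_sub hn, ZMod.natCast_self, zero_sub, sub_eq_add_neg]
  rw [hcast, ZMod.val_add_of_lt] <;> rw [ZMod.val_natCast_of_lt (by omega)] <;> omega

theorem mem_sideInfo_iff [NeZero m] (hs : s ≤ m) {i j : ZMod m} :
    j ∈ sideInfo m s i ↔ (i - j).val < s := by
  constructor
  · rintro ⟨k, hk, rfl⟩
    rw [sub_sub_cancel, ZMod.val_natCast_of_lt ((Finset.mem_range.mp hk).trans_le hs)]
    exact Finset.mem_range.mp hk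
  · exact fun h =>
      ⟨(i - j).val, Finset.mem_range.mpr h, by rw [ZMod.natCast_zmod_val, sub_sub_cancel]⟩

theorem mem_sideInfo_and_add_notMem_iff [NeZero m] {d : ℕ} (hd : d ≤ s) (hm : s + d ≤ m)
    {i a : ZMod m} :
    a ∈ sideInfo m s i ∧ a + d ∉ sideInfo m s i ↔ (i - a).val < d := by
  rw [mem_sideInfo_iff (by omega), mem_sideInfo_iff (by omega), ← sub_sub]
  rcases lt_or_ge (i - a).val d with h | h
  · rw [val_sub_natCast_of_lt h (by omega)]
    omega
  · rw [val_sub_natCast_of_le h]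
    omega

theorem notMem_sideInfo_and_add_mem_iff [NeZero m] {d : ℕ} (hd : d ≤ s) (hm : s + d ≤ m)
    {i a : ZMod m} :
    a ∉ sideInfo m s i ∧ a + d ∈ sideInfo m s i ↔ (i - s - a).val < d := by
  rw [mem_sideInfo_iff (by omega), mem_sideInfo_iff (by omega), ← sub_sub,
    sub_right_comm i (s : ZMod m) a]
  rcases lt_or_ge (i - a).val s with h | h
  · rw [val_sub_natCast_of_lt h (by omega)]
    omega
  · rw [val_sub_natCast_of_le h, val_sub_natCast_of_le (hd.trans h)]
    omega

theorem isDecentralizedCode_pairCode {ℓ : ℕ} {a : Fin ℓ → ZMod m} {d : Fin ℓ → ℕ}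
    (hd : ∀ t, d t < s) : IsDecentralizedCode m s (pairCode a fun t => a t + d t) := by
  intro t
  refine ⟨a t + d t, (Function.support_add _ _).trans (Set.union_subset ?_ ?_)⟩
  · refine (Pi.support_single_subset).trans (Set.singleton_subset_iff.mpr ?_)
    exact ⟨d t, Finset.mem_range.mpr (hd t), by ring⟩
  · refine (Pi.support_single_subset).trans (Set.singleton_subset_iff.mpr ?_)
    exact ⟨0, Finset.mem_range.mpr ((Nat.zero_le _).trans_lt (hd t)), by simp⟩

end Window

section Construction

variable {m s q : ℕ}

def rowOffset (s : ℕ) : Fin 3 → ℕ := ![0, 2, s + 1]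

def rowLength (s : ℕ) : Fin 3 → ℕ := ![1, s - 2, 1]

def rowStart (m s q : ℕ) (t : Fin q × Fin 3) : ZMod m :=
  ((2 * s * t.1 + rowOffset s t.2 : ℕ) : ZMod m)

def rowEnd (m s q : ℕ) (t : Fin q × Fin 3) : ZMod m :=
  rowStart m s q t + (rowLength s t.2 : ℕ)

def Covers (m s : ℕ) {q : ℕ} (t : Fin q × Fin 3) (c : ZMod m) : Prop :=
  (c - rowStart m s q t).val < rowLength s t.2

theorem rowLength_lt (hs : 3 ≤ s) (r : Fin 3) : rowLength s r < s := by
  fin_cases r <;> simp [rowLength] <;> omega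

theorem rowOffset_add_rowLength_lt (hs : 3 ≤ s) (r : Fin 3) :
    rowOffset s r + rowLength s r < 2 * s := by
  fin_cases r <;> simp [rowOffset, rowLength] <;> omega

theorem rowEnd_eq (t : Fin q × Fin 3) :
    rowEnd m s q t = ((2 * s * t.1 + (rowOffset s t.2 + rowLength s t.2) : ℕ) : ZMod m) := by
  simp only [rowEnd, rowStart, Nat.cast_add, add_assoc]

theorem two_mul_le [NeZero m] (hmq : m = 2 * s * q) : 2 * s ≤ m := by
  rcases Nat.eq_zero_or_pos q with rfl | hq
  · exact absurd hmq (by simpa using NeZero.ne m)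
  · exact hmq ▸ Nat.le_mul_of_pos_right _ hq

theorem block_lt (hmq : m = 2 * s * q) {k a : ℕ} (hk : k < q) (ha : a < 2 * s) :
    2 * s * k + a < m :=
  calc _ < 2 * s * (k + 1) := by rw [mul_add]; omega
    _ ≤ m := hmq ▸ Nat.mul_le_mul_left _ hk

theorem natCast_block_injective (hmq : m = 2 * s * q) {k k' a a' : ℕ} (hk : k < q)
    (hk' : k' < q) (ha : a < 2 * s) (ha' : a' < 2 * s)
    (h : ((2 * s * k + a : ℕ) : ZMod m) = ((2 * s * k' + a' : ℕ) : ZMod m)) :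
    k = k' ∧ a = a' := by
  have hval := congrArg ZMod.val h
  rw [ZMod.val_natCast_of_lt (block_lt hmq hk ha),
    ZMod.val_natCast_of_lt (block_lt hmq hk' ha')] at hval
  have hdiv : ∀ {k a : ℕ}, a < 2 * s → (2 * s * k + a) / (2 * s) = k := fun ha => by
    rw [Nat.mul_add_div (by omega), Nat.div_eq_of_lt ha, add_zero]
  obtain rfl : k = k' := by rw [← hdiv (k := k) ha, hval, hdiv ha']
  exact ⟨rfl, by omega⟩

theorem injective_rowStart_rowEnd (hmq : m = 2 * s * q) (hs : 3 ≤ s) :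
    Function.Injective (Sum.elim (rowStart m s q) (rowEnd m s q)) := by
  have hoff := rowOffset_add_rowLength_lt hs
  rintro (⟨k, r⟩ | ⟨k, r⟩) (⟨k', r'⟩ | ⟨k', r'⟩) h <;>
    simp only [Sum.elim_inl, Sum.elim_inr, rowEnd_eq, rowStart] at h <;>
    obtain ⟨hk, hr⟩ := natCast_block_injective hmq k.2 k'.2 (by have := hoff r; omega)
      (by have := hoff r'; omega) h <;>
    fin_cases r <;> fin_cases r' <;> simp [rowOffset, rowLength, Fin.ext hk] at hr ⊢ <;> omega

theorem covers_iff [NeZero m] (hmq : m = 2 * s * q) (hs : 3 ≤ s) {t : Fin q × Fin 3}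
    {c : ZMod m} :
    Covers m s t c ↔ c.val / (2 * s) = t.1 ∧ rowOffset s t.2 ≤ c.val % (2 * s) ∧
      c.val % (2 * s) < rowOffset s t.2 + rowLength s t.2 := by
  have hlt := rowOffset_add_rowLength_lt hs t.2
  rw [← Nat.mul_add_le_and_lt_iff hlt.le, Covers, rowStart]
  rcases le_or_gt (2 * s * t.1 + rowOffset s t.2) c.val with h | h
  · rw [val_sub_natCast_of_le h]
    omega
  · rw [val_sub_natCast_of_lt h (block_lt hmq t.1.2 (by omega)).le]
    have := ZMod.val_lt c
    have := block_lt hmq t.1.2 hlt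
    omega

theorem Covers.unique [NeZero m] (hmq : m = 2 * s * q) (hs : 3 ≤ s) {t t' : Fin q × Fin 3}
    {c : ZMod m} (h : Covers m s t c) (h' : Covers m s t' c) : t = t' := by
  obtain ⟨k, r⟩ := t
  obtain ⟨k', r'⟩ := t'
  rw [covers_iff hmq hs] at h h'
  have hk : k = k' := Fin.ext (h.1.symm.trans h'.1)
  fin_cases r <;> fin_cases r' <;> simp [rowOffset, rowLength, hk] at h h' ⊢ <;> omega

theorem exists_covers_iff [NeZero m] (hmq : m = 2 * s * q) (hs : 3 ≤ s) {c : ZMod m} :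
    (∃ t : Fin q × Fin 3, Covers m s t c) ↔
      ∃ r, rowOffset s r ≤ c.val % (2 * s) ∧ c.val % (2 * s) < rowOffset s r + rowLength s r := by
  simp only [covers_iff hmq hs]
  constructor
  · rintro ⟨t, -, h⟩
    exact ⟨t.2, h⟩
  · rintro ⟨r, h⟩
    have hk : c.val / (2 * s) < q := Nat.div_lt_of_lt_mul (hmq ▸ ZMod.val_lt c)
    exact ⟨(⟨_, hk⟩, r), rfl, h⟩

theorem val_sub_mod_two_mul [NeZero m] (hmq : m = 2 * s * q) (c : ZMod m) :
    (c - s).val % (2 * s) = (c.val % (2 * s) + s) % (2 * s) := by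
  rw [Nat.mod_add_mod]
  rcases le_or_gt s c.val with h | h
  · rw [val_sub_natCast_of_le h, ← Nat.add_mul_mod_self_left _ (2 * s) 1]
    congr 1
    omega
  · have := two_mul_le hmq
    rw [val_sub_natCast_of_lt h (by omega),
      ← Nat.add_mul_mod_self_left (c.val + s) (2 * s) (q - 1), Nat.mul_sub_one, ← hmq]
    congr 1
    omega

theorem exists_covers_sub_iff [NeZero m] (hmq : m = 2 * s * q) (hs : 3 ≤ s) (c : ZMod m) :
    (∃ t : Fin q × Fin 3, Covers m s t (c - s)) ↔ ¬∃ t : Fin q × Fin 3, Covers m s t c := by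
  rw [exists_covers_iff hmq hs, exists_covers_iff hmq hs, val_sub_mod_two_mul hmq]
  have hρ := Nat.mod_lt c.val (show 0 < 2 * s by omega)
  generalize c.val % (2 * s) = ρ at hρ ⊢
  rcases lt_or_ge ρ s with h | h
  · rw [Nat.mod_eq_of_lt (by omega)]
    simp [Fin.exists_fin_succ, rowOffset, rowLength]
    omega
  · rw [Nat.mod_eq_sub_mod (by omega), Nat.mod_eq_of_lt (by omega)]
    simp [Fin.exists_fin_succ, rowOffset, rowLength]
    omega

def code (m s q : ℕ) : Fin (q * 3) → ZMod m → ZMod 2 :=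
  pairCode (rowStart m s q) (rowEnd m s q) ∘ finProdFinEquiv.symm

theorem isDecentralizedCode_code (hs : 3 ≤ s) : IsDecentralizedCode m s (code m s q) :=
  isDecentralizedCode_pairCode (a := rowStart m s q ∘ finProdFinEquiv.symm)
    (d := fun t => rowLength s (finProdFinEquiv.symm t).2) fun _ => rowLength_lt hs _

theorem mem_decSet_code_iff [NeZero m] (hmq : m = 2 * s * q) (hs : 3 ≤ s) {i j : ZMod m} :
    j ∈ decSet m s (code m s q) i ↔
      ∃ t, j = rowStart m s q t ∧ Covers m s t (i - s) ∨ j = rowEnd m s q t ∧ Covers m s t i := by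
  have hrange : Set.range (code m s q) = Set.range (pairCode (rowStart m s q) (rowEnd m s q)) :=
    EquivLike.range_comp _ finProdFinEquiv.symm
  have hinj := injective_rowStart_rowEnd hmq hs
  have hd : ∀ t : Fin q × Fin 3, rowLength s t.2 ≤ s := fun t => (rowLength_lt hs t.2).le
  have hm : ∀ t : Fin q × Fin 3, s + rowLength s t.2 ≤ m := fun t => by
    have := two_mul_le hmq; have := hd t; omega
  simp only [decSet, Set.mem_ofPred_eq, hrange]
  constructor
  · rintro ⟨hjA, hspan⟩
    obtain ⟨t, ⟨rfl, hend⟩ | ⟨rfl, hstart⟩⟩ :=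
      (single_mem_span_pairCode_iff hinj hjA).mp hspan
    · exact ⟨t, .inl ⟨rfl, (notMem_sideInfo_and_add_mem_iff (hd t) (hm t)).mp ⟨hjA, hend⟩⟩⟩
    · exact ⟨t, .inr ⟨rfl, (mem_sideInfo_and_add_notMem_iff (hd t) (hm t)).mp ⟨hstart, hjA⟩⟩⟩
  · rintro ⟨t, ⟨rfl, h⟩ | ⟨rfl, h⟩⟩
    · obtain ⟨hjA, hend⟩ := (notMem_sideInfo_and_add_mem_iff (hd t) (hm t)).mpr h
      exact ⟨hjA, (single_mem_span_pairCode_iff hinj hjA).mpr ⟨t, Or.inl ⟨rfl, hend⟩⟩⟩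
    · obtain ⟨hstart, hjA⟩ := (mem_sideInfo_and_add_notMem_iff (hd t) (hm t)).mpr h
      exact ⟨hjA, (single_mem_span_pairCode_iff hinj hjA).mpr ⟨t, Or.inr ⟨rfl, hstart⟩⟩⟩

theorem correct_code [NeZero m] (hmq : m = 2 * s * q) (hs : 3 ≤ s) :
    Correct m s (code m s q) := by
  intro i
  by_cases h : ∃ t : Fin q × Fin 3, Covers m s t i
  · obtain ⟨t, ht⟩ := h
    exact ⟨_, (mem_decSet_code_iff hmq hs).mpr ⟨t, Or.inr ⟨rfl, ht⟩⟩⟩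
  · obtain ⟨t, ht⟩ := (exists_covers_sub_iff hmq hs i).mpr h
    exact ⟨_, (mem_decSet_code_iff hmq hs).mpr ⟨t, Or.inl ⟨rfl, ht⟩⟩⟩

theorem secure_code [NeZero m] (hmq : m = 2 * s * q) (hs : 3 ≤ s) :
    Secure m s (code m s q) := by
  intro i j hj j' hj'
  have hboth : ∀ {t t'}, Covers m s t (i - s) → Covers m s t' i → False :=
    fun h h' => (exists_covers_sub_iff hmq hs i).mp ⟨_, h⟩ ⟨_, h'⟩
  obtain ⟨t, ⟨rfl, h⟩ | ⟨rfl, h⟩⟩ := (mem_decSet_code_iff hmq hs).mp hj <;>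
    obtain ⟨t', ⟨rfl, h'⟩ | ⟨rfl, h'⟩⟩ := (mem_decSet_code_iff hmq hs).mp hj'
  · rw [Covers.unique hmq hs h h']
  · exact (hboth h h').elim
  · exact (hboth h' h).elim
  · rw [Covers.unique hmq hs h h']

end Construction

end SDPicod

open SDPicod

theorem feasible_two_s_dvd_m (m s : ℕ) (hs : 5 ≤ s) (hm : 4 * s ≤ m)
    (hdvd : 2 * s ∣ m) :
    ∃ G : Fin (3 * m / (2 * s)) → ZMod m → ZMod 2,
      IsDecentralizedCode m s G ∧ Correct m s G ∧ Secure m s G := by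
  obtain ⟨q, hmq⟩ := hdvd
  have : NeZero m := ⟨by omega⟩
  have hlen : 3 * m / (2 * s) = q * 3 := by
    rw [hmq, mul_left_comm, Nat.mul_div_cancel_left _ (by omega), mul_comm]
  rw [hlen]
  exact ⟨code m s q, isDecentralizedCode_code (by omega), correct_code hmq (by omega),
    secure_code hmq (by omega)⟩
end

section
/- For all integers m, s with s ≥ 5 and m > 2s such that the remainder r = m mod 2s satisfies 4 ≤ r ≤ s, there exists a decentralized linear code of length ℓ = 3·(m − r)/(2·s) + 2 for parameters (m, s) that is both correct and secure. -/
open SDPicod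

/-!
Write `m = 2sn + r`. Positions `[2su, 2su + 2s)` form block `u < n`; with `p = 2su` it carries
the rows `{p, p+1}`, `{p+2, p+s}`, `{p+s+1, p+s+2}`, and the last `r` positions (with the
wrap-around to position `0`) are served by two seam rows of size at most four, which may meet each
other but meet no block row. Every row lies in some window of `s` consecutive indices.

Over `GF(2)`, user `i` decodes `j` iff some combination of rows agrees with `e j` outside `A i`.
Since block rows meet no other row, such a combination restricts to one block row, or to one of
`R₁`, `R₂`, `R₁ ∆ R₂` for the seam rows, and that set must have exactly `j` outside `A i`. Working
with positions in `ℕ`, where `A i` becomes an interval possibly wrapping past `m`, a case analysis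
shows that each of these sets can isolate only one index `decode i` for user `i`, and that some
row does isolate it.
-/

namespace SDPicod

def InWindow (m s a v : ℕ) : Prop :=
  a ≤ v ∧ v < a + s ∨ v + m < a + s

theorem natCast_mem_sideInfo_iff {m s a v : ℕ} (hsm : s ≤ m) (ha : a < m) (hv : v < m) :
    (a : ZMod m) ∈ sideInfo m s (v : ZMod m) ↔ InWindow m s a v := by
  have : NeZero m := ⟨by omega⟩
  constructor
  · rintro ⟨k, hk, hak⟩
    rw [Finset.mem_range] at hk
    have hcast : ((a + k : ℕ) : ZMod m) = (v : ZMod m) := by push_cast; rw [hak]; ring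
    rw [ZMod.natCast_eq_natCast_iff', Nat.mod_eq_of_lt hv] at hcast
    rcases Nat.lt_or_ge (a + k) m with hlt | hge
    · rw [Nat.mod_eq_of_lt hlt] at hcast; unfold InWindow; omega
    · rw [Nat.mod_eq_sub_mod hge, Nat.mod_eq_of_lt (by omega)] at hcast; unfold InWindow; omega
  · rintro (⟨hav, hva⟩ | hwrap)
    · refine ⟨v - a, Finset.mem_range.mpr (by omega), ?_⟩
      rw [Nat.cast_sub hav]; ring
    · refine ⟨v + m - a, Finset.mem_range.mpr (by omega), ?_⟩
      rw [Nat.cast_sub (by omega)]; push_cast; rw [ZMod.natCast_self]; ring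

theorem mem_sideInfo_iff_s11 {m s : ℕ} [NeZero m] (hsm : s ≤ m) (x i : ZMod m) :
    x ∈ sideInfo m s i ↔ InWindow m s x.val i.val := by
  rw [← natCast_mem_sideInfo_iff hsm x.val_lt i.val_lt, ZMod.natCast_zmod_val,
    ZMod.natCast_zmod_val]

theorem mem_span_pi_single_iff {K α : Type*} [Semiring K] [Fintype α] [DecidableEq α]
    (A : Set α) (z : α → K) :
    z ∈ Submodule.span K {w | ∃ k ∈ A, w = Pi.single k 1} ↔ ∀ x ∉ A, z x = 0 := by
  constructor
  · intro hz
    induction hz using Submodule.span_induction with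
    | mem w hw =>
      obtain ⟨k, hk, rfl⟩ := hw
      intro x hx
      exact Pi.single_eq_of_ne (by rintro rfl; exact hx hk) 1
    | zero => intro x _; rfl
    | add u w _ _ hu hw => intro x hx; simp [hu x hx, hw x hx]
    | smul c w _ hw => intro x hx; simp [hw x hx]
  · intro hz
    rw [← Finset.univ_sum_single z]
    refine Submodule.sum_mem _ fun x _ => ?_
    by_cases hx : x ∈ A
    · rw [← mul_one (z x), ← smul_eq_mul, Pi.single_smul]
      exact Submodule.smul_mem _ _ (Submodule.subset_span ⟨x, hx, rfl⟩)
    · rw [hz x hx, Pi.single_zero]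
      exact Submodule.zero_mem _

theorem mem_span_range_union_iff {K α ι : Type*} [Ring K] [Fintype α] [DecidableEq α]
    [Fintype ι] (g : ι → α → K) (A : Set α) (v : α → K) :
    v ∈ Submodule.span K (Set.range g ∪ {w | ∃ k ∈ A, w = Pi.single k 1}) ↔
      ∃ c : ι → K, ∀ x ∉ A, (∑ t, c t • g t) x = v x := by
  rw [Submodule.span_union, Submodule.mem_sup]
  constructor
  · rintro ⟨y, hy, z, hz, rfl⟩
    obtain ⟨c, rfl⟩ := (Submodule.mem_span_range_iff_exists_fun K).mp hy
    exact ⟨c, fun x hx => by simp [(mem_span_pi_single_iff A z).mp hz x hx]⟩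
  · rintro ⟨c, hc⟩
    refine ⟨∑ t, c t • g t, (Submodule.mem_span_range_iff_exists_fun K).mpr ⟨c, rfl⟩,
      v - ∑ t, c t • g t, (mem_span_pi_single_iff A _).mpr fun x hx => ?_, add_sub_cancel _ _⟩
    simp [hc x hx]

theorem exists_ite_add_ite_eq_ite (c₁ c₂ : ZMod 2) (P Q : Finset ℕ) :
    ∃ S, (S = ∅ ∨ S = P ∨ S = Q ∨ S = symmDiff P Q) ∧ S ⊆ P ∪ Q ∧
      ∀ b, (if b ∈ P then c₁ else 0) + (if b ∈ Q then c₂ else 0) = if b ∈ S then 1 else 0 := by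
  have h01 : ∀ c : ZMod 2, c = 0 ∨ c = 1 := by decide
  rcases h01 c₁ with rfl | rfl <;> rcases h01 c₂ with rfl | rfl
  · exact ⟨∅, by simp, by simp, fun b => by simp⟩
  · exact ⟨Q, by simp, Finset.subset_union_right, fun b => by simp⟩
  · exact ⟨P, by simp, Finset.subset_union_left, fun b => by simp⟩
  · have h11 : (1 : ZMod 2) + 1 = 0 := by decide
    refine ⟨symmDiff P Q, by simp, Finset.symmDiff_subset_union, fun b => ?_⟩
    by_cases hP : b ∈ P <;> by_cases hQ : b ∈ Q <;> simp [Finset.mem_symmDiff, hP, hQ, h11]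

namespace FourToS

structure Params (m s n r : ℕ) : Prop where
  five_le_s : 5 ≤ s
  four_le_r : 4 ≤ r
  r_le_s : r ≤ s
  one_le_n : 1 ≤ n
  m_eq : m = 2 * s * n + r

theorem two_mul_mul_add_le {s u u' : ℕ} (h : u < u') : 2 * s * u + 2 * s ≤ 2 * s * u' :=
  calc 2 * s * u + 2 * s = 2 * s * (u + 1) := by ring
    _ ≤ 2 * s * u' := Nat.mul_le_mul_left _ h

theorem Params.s_le_m {m s n r : ℕ} (h : Params m s n r) : s ≤ m := by
  have := two_mul_mul_add_le (s := s) h.one_le_n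
  have := h.m_eq
  omega

theorem Params.neZero {m s n r : ℕ} (h : Params m s n r) : NeZero m :=
  ⟨by have := h.s_le_m; have := h.five_le_s; omega⟩

def blockRow (s u : ℕ) : ℕ → Finset ℕ
  | 0 => {2 * s * u, 2 * s * u + 1}
  | 1 => {2 * s * u + 2, 2 * s * u + s}
  | _ => {2 * s * u + s + 1, 2 * s * u + s + 2}

-- Since `n ≥ 1`, none of the subtractions in the seam rows truncates.
def seamRow₁ (s n r : ℕ) : Finset ℕ :=
  {2 * s * n + 3 - s, 2 * s * n + r - s, 2 * s * n, 2 * s * n + 1}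

def seamRow₂ (s n r : ℕ) : Finset ℕ :=
  {2 * s * n + r + 1 - s, 2 * s * n + r + 2 - s, 2 * s * n + 2, 2 * s * n + 3}

def codeRow (s n r t : ℕ) : Finset ℕ :=
  if t < 3 * n then blockRow s (t / 3) (t % 3)
  else if t = 3 * n then seamRow₁ s n r else seamRow₂ s n r

def code (m s n r : ℕ) (t : Fin (3 * n + 2)) (x : ZMod m) : ZMod 2 :=
  if x.val ∈ codeRow s n r t then 1 else 0

theorem mem_blockRow {s u k b : ℕ} (hk : k < 3) :
    b ∈ blockRow s u k ↔ k = 0 ∧ (b = 2 * s * u ∨ b = 2 * s * u + 1) ∨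
      k = 1 ∧ (b = 2 * s * u + 2 ∨ b = 2 * s * u + s) ∨
      k = 2 ∧ (b = 2 * s * u + s + 1 ∨ b = 2 * s * u + s + 2) := by
  interval_cases k <;> simp [blockRow]

theorem codeRow_of_lt {s n r t : ℕ} (ht : t < 3 * n) :
    codeRow s n r t = blockRow s (t / 3) (t % 3) :=
  if_pos ht

theorem codeRow_block {s n r u k : ℕ} (hu : u < n) (hk : k < 3) :
    codeRow s n r (3 * u + k) = blockRow s u k := by
  rw [codeRow_of_lt (by omega)]
  congr 1 <;> omega

theorem codeRow_seam₁ (s n r : ℕ) : codeRow s n r (3 * n) = seamRow₁ s n r := by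
  rw [codeRow, if_neg (lt_irrefl _), if_pos rfl]

theorem codeRow_seam₂ (s n r : ℕ) : codeRow s n r (3 * n + 1) = seamRow₂ s n r := by
  rw [codeRow, if_neg (by omega), if_neg (by omega)]

theorem codeRow_subset_seamRow {s n r t : ℕ} (ht : ¬ t < 3 * n) :
    codeRow s n r t ⊆ seamRow₁ s n r ∪ seamRow₂ s n r := by
  rw [codeRow, if_neg ht]
  split_ifs
  exacts [Finset.subset_union_left, Finset.subset_union_right]

theorem disjoint_blockRow {s u u' k k' : ℕ} (hs : 3 ≤ s) (hk : k < 3) (hk' : k' < 3)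
    (hne : (u, k) ≠ (u', k')) : Disjoint (blockRow s u k) (blockRow s u' k') := by
  rw [Finset.disjoint_left]
  intro b hb hb'
  rw [mem_blockRow hk] at hb
  rw [mem_blockRow hk'] at hb'
  rcases lt_trichotomy u u' with hlt | rfl | hgt
  · have := two_mul_mul_add_le (s := s) hlt
    omega
  · have : k ≠ k' := fun h => hne (h ▸ rfl)
    omega
  · have := two_mul_mul_add_le (s := s) hgt
    omega

theorem disjoint_blockRow_seamRow {m s n r u k : ℕ} (h : Params m s n r) (hu : u < n)
    (hk : k < 3) : Disjoint (blockRow s u k) (seamRow₁ s n r ∪ seamRow₂ s n r) := by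
  obtain ⟨hs, hr, hrs, hn, rfl⟩ := h
  have := two_mul_mul_add_le (s := s) hu
  rw [Finset.disjoint_left]
  intro b hb hb'
  rw [mem_blockRow hk] at hb
  simp only [seamRow₁, seamRow₂, Finset.mem_union, Finset.mem_insert,
    Finset.mem_singleton] at hb'
  omega

theorem disjoint_codeRow {m s n r t t' : ℕ} (h : Params m s n r) (ht : t < 3 * n)
    (hne : t ≠ t') : Disjoint (codeRow s n r t) (codeRow s n r t') := by
  rw [codeRow_of_lt ht]
  by_cases ht' : t' < 3 * n
  · rw [codeRow_of_lt ht']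
    exact disjoint_blockRow (by linarith [h.five_le_s]) (by omega) (by omega)
      (fun he => hne (by simp only [Prod.ext_iff] at he; omega))
  · exact (disjoint_blockRow_seamRow h (by omega) (by omega)).mono_right
      (codeRow_subset_seamRow ht')

theorem exists_window_codeRow {m s n r t : ℕ} (h : Params m s n r) (ht : t < 3 * n + 2) :
    ∃ v < m, ∀ b ∈ codeRow s n r t, InWindow m s b v := by
  obtain ⟨hs, hr, hrs, hn, rfl⟩ := h
  have hb := two_mul_mul_add_le (s := s) hn
  unfold InWindow
  by_cases htb : t < 3 * n
  · have := two_mul_mul_add_le (s := s) (show t / 3 < n by omega)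
    rw [codeRow_of_lt htb]
    generalize t / 3 = u at *
    have hk : t % 3 < 3 := Nat.mod_lt _ (by norm_num)
    generalize t % 3 = k at *
    interval_cases k <;> simp only [blockRow, Finset.mem_insert, Finset.mem_singleton,
      forall_eq_or_imp, forall_eq]
    exacts [⟨2 * s * u + 1, by omega, by omega, by omega⟩,
      ⟨2 * s * u + s, by omega, by omega, by omega⟩,
      ⟨2 * s * u + s + 2, by omega, by omega, by omega⟩]
  · obtain rfl | rfl : t = 3 * n ∨ t = 3 * n + 1 := by omega
    · rw [codeRow_seam₁]
      simp only [seamRow₁, Finset.mem_insert, Finset.mem_singleton, forall_eq_or_imp, forall_eq]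
      exact ⟨2 * s * n + 1, by omega, by omega, by omega, by omega, by omega⟩
    · rw [codeRow_seam₂]
      simp only [seamRow₂, Finset.mem_insert, Finset.mem_singleton, forall_eq_or_imp, forall_eq]
      exact ⟨2 * s * n + 3, by omega, by omega, by omega, by omega, by omega⟩

-- User `p + w` decodes from the row of its block that its window cuts down to one index; for
-- `w = 1` this is the last row of the previous block, or the second seam row when `p = 0`.
def blockDecode (m s p w : ℕ) : ℕ :=
  if w = 0 then p + 1
  else if w = 1 then (if p = 0 then m + 1 - s else p + 1 - s)
  else if w < s then p + s
  else if w = s then p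
  else if w = s + 1 then p + s + 2
  else p + 2

def seamDecode (s b o : ℕ) : ℕ :=
  if o = 0 then b + 1
  else if o = 1 then b + 1 - s
  else if o = 2 then b + 3
  else b + 3 - s

def decode (m s n v : ℕ) : ℕ :=
  if v < 2 * s * n then blockDecode m s (2 * s * (v / (2 * s))) (v % (2 * s))
  else seamDecode s (2 * s * n) (v - 2 * s * n)

theorem decode_block {m s n u w : ℕ} (hu : u < n) (hw : w < 2 * s) :
    decode m s n (2 * s * u + w) = blockDecode m s (2 * s * u) w := by
  have hlt := two_mul_mul_add_le (s := s) hu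
  have hdiv : (2 * s * u + w) / (2 * s) = u := by
    rw [Nat.mul_add_div (by omega), Nat.div_eq_of_lt hw, add_zero]
  have hmod : (2 * s * u + w) % (2 * s) = w := by rw [Nat.mul_add_mod, Nat.mod_eq_of_lt hw]
  rw [decode, if_pos (by omega), hdiv, hmod]

theorem decode_seam (m s n o : ℕ) :
    decode m s n (2 * s * n + o) = seamDecode s (2 * s * n) o := by
  rw [decode, if_neg (by omega), Nat.add_sub_cancel_left]

theorem decode_one {m s n : ℕ} (hs : 2 ≤ s) (hn : 0 < n) : decode m s n 1 = m + 1 - s := by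
  have h := decode_block (m := m) hn (show 1 < 2 * s by omega)
  rw [mul_zero, zero_add] at h
  rw [h, blockDecode, if_neg one_ne_zero, if_pos rfl, if_pos rfl]

theorem decode_add_two_mul_add_one {m s n u : ℕ} (hs : 2 ≤ s) (hu : u < n) :
    decode m s n (2 * s * u + 2 * s + 1) = 2 * s * u + s + 1 := by
  have hnext : 2 * s * (u + 1) = 2 * s * u + 2 * s := by ring
  have hsub : 2 * s * u + 2 * s + 1 - s = 2 * s * u + s + 1 := by omega
  rcases Nat.lt_or_ge (u + 1) n with hlt | hge
  · have h := decode_block (m := m) hlt (show 1 < 2 * s by omega)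
    rw [hnext] at h
    rw [h, blockDecode, if_neg one_ne_zero, if_pos rfl, if_neg (by omega), hsub]
  · obtain rfl : n = u + 1 := by omega
    have h := decode_seam m s (u + 1) 1
    rw [hnext] at h
    rw [h, seamDecode, if_neg one_ne_zero, if_pos rfl, hsub]

def Isolates (m s : ℕ) (S : Finset ℕ) (v a : ℕ) : Prop :=
  a < m ∧ ¬ InWindow m s a v ∧ ∀ b < m, ¬ InWindow m s b v → (b ∈ S ↔ b = a)

def RevealsOnlyDecode (m s n : ℕ) (S : Finset ℕ) : Prop :=
  ∀ v < m, ∀ a, Isolates m s S v a → a = decode m s n v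

theorem revealsOnlyDecode_blockRow {m s n r u k : ℕ} (h : Params m s n r) (hu : u < n)
    (hk : k < 3) : RevealsOnlyDecode m s n (blockRow s u k) := by
  obtain ⟨hs, hr, hrs, hn, rfl⟩ := h
  have hgap := two_mul_mul_add_le (s := s) hu
  have hdec : ∀ w < 2 * s, decode (2 * s * n + r) s n (2 * s * u + w) =
      blockDecode (2 * s * n + r) s (2 * s * u) w := fun w hw => decode_block hu hw
  have hnext := decode_add_two_mul_add_one (m := 2 * s * n + r) (s := s) (by omega) hu
  intro v hv a ⟨ha, hout, hiso⟩
  have hmem := (hiso a ha hout).2 rfl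
  -- The isolation property at the two row elements pins the offset of `v` in its block.
  interval_cases k <;>
    simp only [blockRow, Finset.mem_insert, Finset.mem_singleton] at hiso hmem <;>
    unfold InWindow at hiso hout <;> generalize 2 * s * u = p at * <;> generalize 2 * s * n = b at *
  · have h₀ := hiso p (by omega)
    have h₁ := hiso (p + 1) (by omega)
    obtain ⟨w, hw, rfl⟩ : ∃ w, w < 2 * s ∧ v = p + w := ⟨v - p, by omega, by omega⟩
    rw [hdec w hw, blockDecode]
    split_ifs <;> omega
  · have h₀ := hiso (p + 2) (by omega)
    have h₁ := hiso (p + s) (by omega)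
    obtain ⟨w, hw, rfl⟩ : ∃ w, w < 2 * s ∧ v = p + w := ⟨v - p, by omega, by omega⟩
    rw [hdec w hw, blockDecode]
    split_ifs <;> omega
  · have h₀ := hiso (p + s + 1) (by omega)
    have h₁ := hiso (p + s + 2) (by omega)
    rcases (by omega : v < p + 2 * s ∨ v = p + 2 * s + 1) with hv | rfl
    · obtain ⟨w, hw, rfl⟩ : ∃ w, w < 2 * s ∧ v = p + w := ⟨v - p, by omega, by omega⟩
      rw [hdec w hw, blockDecode]
      split_ifs <;> omega
    · omega

theorem revealsOnlyDecode_seamRow₁ {m s n r : ℕ} (h : Params m s n r) :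
    RevealsOnlyDecode m s n (seamRow₁ s n r) := by
  obtain ⟨hs, hr, hrs, hn, rfl⟩ := h
  have hb := two_mul_mul_add_le (s := s) hn
  have hdec := decode_seam (2 * s * n + r) s n
  intro v hv a ⟨ha, hout, hiso⟩
  have hmem := (hiso a ha hout).2 rfl
  simp only [seamRow₁, Finset.mem_insert, Finset.mem_singleton] at hiso hmem
  unfold InWindow at hiso hout
  generalize 2 * s * n = b at *
  have hA := hiso (b + 3 - s) (by omega)
  have hB := hiso (b + r - s) (by omega)
  have hC := hiso b (by omega)
  have hD := hiso (b + 1) (by omega)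
  obtain ⟨o, rfl⟩ : ∃ o, v = b + o := ⟨v - b, by omega⟩
  rw [hdec, seamDecode]
  split_ifs <;> omega

theorem revealsOnlyDecode_seamRow₂ {m s n r : ℕ} (h : Params m s n r) :
    RevealsOnlyDecode m s n (seamRow₂ s n r) := by
  obtain ⟨hs, hr, hrs, hn, rfl⟩ := h
  have hb := two_mul_mul_add_le (s := s) hn
  have hdec := decode_seam (2 * s * n + r) s n
  have hone := decode_one (m := 2 * s * n + r) (s := s) (by omega) (by omega : 0 < n)
  intro v hv a ⟨ha, hout, hiso⟩
  have hmem := (hiso a ha hout).2 rfl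
  simp only [seamRow₂, Finset.mem_insert, Finset.mem_singleton] at hiso hmem
  unfold InWindow at hiso hout
  generalize 2 * s * n = b at *
  have hE := hiso (b + r + 1 - s) (by omega)
  have hF := hiso (b + r + 2 - s) (by omega)
  have hG := hiso (b + 2) (by omega)
  have hH := hiso (b + 3) (by omega)
  rcases (by omega : v = 1 ∨ b ≤ v) with rfl | hvb
  · omega
  · obtain ⟨o, rfl⟩ : ∃ o, v = b + o := ⟨v - b, by omega⟩
    rw [hdec, seamDecode]
    split_ifs <;> omega

theorem revealsOnlyDecode_symmDiff_seamRow {m s n r : ℕ} (h : Params m s n r) :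
    RevealsOnlyDecode m s n (symmDiff (seamRow₁ s n r) (seamRow₂ s n r)) := by
  obtain ⟨hs, hr, hrs, hn, rfl⟩ := h
  have hb := two_mul_mul_add_le (s := s) hn
  have hdec := decode_seam (2 * s * n + r) s n
  intro v hv a ⟨ha, hout, hiso⟩
  have hmem := (hiso a ha hout).2 rfl
  simp only [Finset.mem_symmDiff, seamRow₁, seamRow₂, Finset.mem_insert,
    Finset.mem_singleton] at hiso hmem
  unfold InWindow at hiso hout
  generalize 2 * s * n = b at *
  -- `b + 3 - s` and `b + 3` are `s` apart, so no window holds both.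
  have hA := hiso (b + 3 - s) (by omega)
  have hB := hiso (b + r - s) (by omega)
  have hG := hiso (b + 2) (by omega)
  have hH := hiso (b + 3) (by omega)
  obtain ⟨o, rfl⟩ : ∃ o, v = b + o := ⟨v - b, by omega⟩
  rw [hdec, seamDecode]
  split_ifs <;> omega

theorem exists_isolates_decode_block {m s n r u w : ℕ} (h : Params m s n r) (hu : u < n)
    (hw : w < 2 * s) (hw1 : w ≠ 1) :
    ∃ t < 3 * n + 2,
      Isolates m s (codeRow s n r t) (2 * s * u + w) (decode m s n (2 * s * u + w)) := by
  obtain ⟨hs, hr, hrs, hn, rfl⟩ := h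
  have hgap := two_mul_mul_add_le (s := s) hu
  obtain ⟨k, hk, hk0, hk2⟩ : ∃ k < 3, (k = 0 ↔ w = 0 ∨ w = s) ∧ (k = 2 ↔ w = s + 1) := by
    by_cases h0 : w = 0 ∨ w = s
    · exact ⟨0, by omega, by omega, by omega⟩
    · by_cases h2 : w = s + 1
      · exact ⟨2, by omega, by omega, by omega⟩
      · exact ⟨1, by omega, by omega, by omega⟩
  refine ⟨3 * u + k, by omega, ?_⟩
  rw [codeRow_block hu hk, decode_block hu hw, blockDecode]
  unfold Isolates InWindow
  interval_cases k <;> simp only [blockRow, Finset.mem_insert, Finset.mem_singleton] <;>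
    generalize 2 * s * u = p at * <;> generalize 2 * s * n = b at * <;>
    split_ifs <;> exact ⟨by omega, by omega, fun c _ _ => by omega⟩

theorem exists_isolates_decode_add_two_mul_add_one {m s n r u : ℕ} (h : Params m s n r)
    (hu : u < n) :
    ∃ t < 3 * n + 2, Isolates m s (codeRow s n r t) (2 * s * u + 2 * s + 1)
      (decode m s n (2 * s * u + 2 * s + 1)) := by
  obtain ⟨hs, hr, hrs, hn, rfl⟩ := h
  have hgap := two_mul_mul_add_le (s := s) hu
  refine ⟨3 * u + 2, by omega, ?_⟩
  rw [codeRow_block hu (by norm_num), decode_add_two_mul_add_one (by omega) hu]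
  unfold Isolates InWindow
  simp only [blockRow, Finset.mem_insert, Finset.mem_singleton]
  generalize 2 * s * u = p at *
  exact ⟨by omega, by omega, fun c _ _ => by omega⟩

theorem exists_isolates_decode_one {m s n r : ℕ} (h : Params m s n r) :
    ∃ t < 3 * n + 2, Isolates m s (codeRow s n r t) 1 (decode m s n 1) := by
  obtain ⟨hs, hr, hrs, hn, rfl⟩ := h
  have hb := two_mul_mul_add_le (s := s) hn
  refine ⟨3 * n + 1, by omega, ?_⟩
  rw [codeRow_seam₂, decode_one (by omega) (by omega)]
  unfold Isolates InWindow
  simp only [seamRow₂, Finset.mem_insert, Finset.mem_singleton]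
  generalize 2 * s * n = b at *
  exact ⟨by omega, by omega, fun c _ _ => by omega⟩

theorem exists_isolates_decode_seam {m s n r o : ℕ} (h : Params m s n r) (ho : o < r)
    (ho1 : o ≠ 1) :
    ∃ t < 3 * n + 2,
      Isolates m s (codeRow s n r t) (2 * s * n + o) (decode m s n (2 * s * n + o)) := by
  obtain ⟨hs, hr, hrs, hn, rfl⟩ := h
  have hb := two_mul_mul_add_le (s := s) hn
  rw [decode_seam, seamDecode]
  by_cases ho2 : o = 2
  · refine ⟨3 * n + 1, by omega, ?_⟩
    rw [codeRow_seam₂]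
    unfold Isolates InWindow
    simp only [seamRow₂, Finset.mem_insert, Finset.mem_singleton]
    generalize 2 * s * n = b at *
    split_ifs <;> exact ⟨by omega, by omega, fun c _ _ => by omega⟩
  · refine ⟨3 * n, by omega, ?_⟩
    rw [codeRow_seam₁]
    unfold Isolates InWindow
    simp only [seamRow₁, Finset.mem_insert, Finset.mem_singleton]
    generalize 2 * s * n = b at *
    split_ifs <;> exact ⟨by omega, by omega, fun c _ _ => by omega⟩

theorem exists_isolates_decode {m s n r v : ℕ} (h : Params m s n r) (hv : v < m) :
    ∃ t < 3 * n + 2, Isolates m s (codeRow s n r t) v (decode m s n v) := by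
  have hs := h.five_le_s
  by_cases hvb : v < 2 * s * n
  · obtain ⟨u, w, hw, rfl⟩ : ∃ u w, w < 2 * s ∧ v = 2 * s * u + w :=
      ⟨v / (2 * s), v % (2 * s), Nat.mod_lt _ (by omega), (Nat.div_add_mod _ _).symm⟩
    have hu : u < n := by
      by_contra hu
      have := Nat.mul_le_mul_left (2 * s) (not_lt.mp hu)
      omega
    by_cases hw1 : w = 1
    · subst hw1
      rcases u with _ | u
      · exact exists_isolates_decode_one h
      · rw [show 2 * s * (u + 1) + 1 = 2 * s * u + 2 * s + 1 by ring]
        exact exists_isolates_decode_add_two_mul_add_one h (by omega)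
    · exact exists_isolates_decode_block h hu hw hw1
  · obtain ⟨o, rfl⟩ : ∃ o, v = 2 * s * n + o := ⟨v - 2 * s * n, by omega⟩
    have ho : o < r := by have := h.m_eq; omega
    by_cases ho1 : o = 1
    · subst ho1
      obtain ⟨n, rfl⟩ : ∃ n', n = n' + 1 := ⟨n - 1, by have := h.one_le_n; omega⟩
      rw [show 2 * s * (n + 1) + 1 = 2 * s * n + 2 * s + 1 by ring]
      exact exists_isolates_decode_add_two_mul_add_one h (by omega)
    · exact exists_isolates_decode_seam h ho ho1

theorem isolates_val_iff {m s : ℕ} [NeZero m] (hsm : s ≤ m) {S : Finset ℕ} {i j : ZMod m} :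
    Isolates m s S i.val j.val ↔
      j ∉ sideInfo m s i ∧ ∀ x ∉ sideInfo m s i, (x.val ∈ S ↔ x = j) := by
  simp only [Isolates, mem_sideInfo_iff_s11 hsm]
  constructor
  · rintro ⟨-, hj, hS⟩
    exact ⟨hj, fun x hx => (hS x.val x.val_lt hx).trans (ZMod.val_injective m).eq_iff⟩
  · rintro ⟨hj, hS⟩
    refine ⟨j.val_lt, hj, fun b hb hbw => ?_⟩
    have hval : (b : ZMod m).val = b := ZMod.val_cast_of_lt hb
    rw [← hval] at hbw ⊢
    rw [hS _ hbw, ← (ZMod.val_injective m).eq_iff]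

theorem isolates_of_agree {m s : ℕ} [NeZero m] (hsm : s ≤ m) {f : ZMod m → ZMod 2}
    {S U : Finset ℕ} {i j : ZMod m}
    (hf : ∀ x ∉ sideInfo m s i, f x = (Pi.single j 1 : ZMod m → ZMod 2) x)
    (hj : j ∉ sideInfo m s i) (hjU : j.val ∈ U) (hSU : S ⊆ U)
    (hfU : ∀ x : ZMod m, x.val ∈ U → f x = if x.val ∈ S then 1 else 0) :
    Isolates m s S i.val j.val := by
  rw [isolates_val_iff hsm]
  refine ⟨hj, fun x hx => ?_⟩
  by_cases hxU : x.val ∈ U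
  · have hx' := (hfU x hxU).symm.trans (hf x hx)
    rw [Pi.single_apply] at hx'
    split_ifs at hx' <;> simp_all
  · have hxj : x ≠ j := by rintro rfl; exact hxU hjU
    simp only [hxj, iff_false]
    exact fun hxS => hxU (hSU hxS)

theorem sum_smul_code_apply {m s n r : ℕ} (c : Fin (3 * n + 2) → ZMod 2) (x : ZMod m) :
    (∑ t, c t • code m s n r t) x =
      ∑ t : Fin (3 * n + 2), if x.val ∈ codeRow s n r t then c t else 0 := by
  simp [Finset.sum_apply, code]

theorem sum_smul_code_apply_of_mem_block {m s n r : ℕ} (h : Params m s n r)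
    (c : Fin (3 * n + 2) → ZMod 2) {t : Fin (3 * n + 2)} (ht : t.val < 3 * n) {x : ZMod m}
    (hx : x.val ∈ codeRow s n r t) : (∑ t', c t' • code m s n r t') x = c t := by
  rw [sum_smul_code_apply, Finset.sum_eq_single t _ (by simp), if_pos hx]
  intro t' _ hne
  rw [if_neg]
  exact Finset.disjoint_left.mp (disjoint_codeRow h ht (Fin.val_ne_of_ne hne.symm)) hx

theorem sum_smul_code_apply_of_mem_seam {m s n r : ℕ} (h : Params m s n r)
    (c : Fin (3 * n + 2) → ZMod 2) {x : ZMod m}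
    (hx : x.val ∈ seamRow₁ s n r ∪ seamRow₂ s n r) :
    (∑ t, c t • code m s n r t) x =
      (if x.val ∈ seamRow₁ s n r then c ⟨3 * n, by omega⟩ else 0) +
        (if x.val ∈ seamRow₂ s n r then c ⟨3 * n + 1, by omega⟩ else 0) := by
  rw [sum_smul_code_apply, Fintype.sum_eq_add ⟨3 * n, by omega⟩ ⟨3 * n + 1, by omega⟩
    (by simp [Fin.ext_iff])]
  · rw [← codeRow_seam₁ s n r, ← codeRow_seam₂ s n r]
  · rintro t ⟨h₁, h₂⟩
    have ht : t.val < 3 * n := by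
      have := t.isLt
      simp only [ne_eq, Fin.ext_iff] at h₁ h₂
      omega
    rw [codeRow_of_lt ht]
    exact if_neg (Finset.disjoint_right.mp (disjoint_blockRow_seamRow h (by omega) (by omega)) hx)

theorem exists_revealsOnlyDecode_isolates {m s n r : ℕ} (h : Params m s n r) {i j : ZMod m}
    (hj : j ∈ decSet m s (code m s n r) i) :
    ∃ S, RevealsOnlyDecode m s n S ∧ Isolates m s S i.val j.val := by
  have := h.neZero
  have hsm := h.s_le_m
  obtain ⟨hjA, hspan⟩ := hj
  obtain ⟨c, hc⟩ := (mem_span_range_union_iff _ _ _).mp hspan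
  have hcj : (∑ t, c t • code m s n r t) j = 1 := by rw [hc j hjA, Pi.single_eq_same]
  by_cases hblock : ∃ t : Fin (3 * n + 2), t.val < 3 * n ∧ j.val ∈ codeRow s n r t
  · obtain ⟨t, ht, hjt⟩ := hblock
    refine ⟨codeRow s n r t, ?_, isolates_of_agree hsm hc hjA hjt subset_rfl fun x hx => ?_⟩
    · rw [codeRow_of_lt ht]
      exact revealsOnlyDecode_blockRow h (by omega) (by omega)
    · rw [sum_smul_code_apply_of_mem_block h c ht hx, if_pos hx,
        ← sum_smul_code_apply_of_mem_block h c ht hjt, hcj]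
  · push Not at hblock
    have hjseam : j.val ∈ seamRow₁ s n r ∪ seamRow₂ s n r := by
      by_contra hns
      rw [sum_smul_code_apply, Finset.sum_eq_zero] at hcj
      · exact zero_ne_one hcj
      intro t _
      rw [if_neg]
      intro hjt
      by_cases ht : t.val < 3 * n
      · exact hblock t ht hjt
      · exact hns (codeRow_subset_seamRow ht hjt)
    obtain ⟨S, hS, hSU, hSc⟩ :=
      exists_ite_add_ite_eq_ite (c ⟨3 * n, by omega⟩) (c ⟨3 * n + 1, by omega⟩) _ _
    refine ⟨S, ?_, isolates_of_agree hsm hc hjA hjseam hSU fun x hx => by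
      rw [sum_smul_code_apply_of_mem_seam h c hx, hSc]⟩
    rcases hS with rfl | rfl | rfl | rfl
    · exact fun _ _ a ha => absurd ((ha.2.2 a ha.1 ha.2.1).2 rfl) (Finset.notMem_empty a)
    · exact revealsOnlyDecode_seamRow₁ h
    · exact revealsOnlyDecode_seamRow₂ h
    · exact revealsOnlyDecode_symmDiff_seamRow h

theorem mem_decSet_of_isolates {m s n r : ℕ} [NeZero m] (hsm : s ≤ m) {t : Fin (3 * n + 2)}
    {i j : ZMod m} (h : Isolates m s (codeRow s n r t) i.val j.val) :
    j ∈ decSet m s (code m s n r) i := by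
  obtain ⟨hj, hS⟩ := (isolates_val_iff hsm).mp h
  refine ⟨hj, (mem_span_range_union_iff _ _ _).mpr ⟨Pi.single t 1, fun x hx => ?_⟩⟩
  rw [sum_smul_code_apply, Finset.sum_eq_single t (fun t' _ hne => by simp [hne]) (by simp),
    Pi.single_eq_same, Pi.single_apply]
  exact if_congr (hS x hx) rfl rfl

theorem isDecentralizedCode_code {m s n r : ℕ} (h : Params m s n r) :
    IsDecentralizedCode m s (code m s n r) := by
  have := h.neZero
  intro t
  obtain ⟨v, hv, hwin⟩ := exists_window_codeRow h t.isLt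
  refine ⟨v, fun x hx => ?_⟩
  have hxt : x.val ∈ codeRow s n r t := by
    by_contra hxt
    exact hx (if_neg hxt)
  rw [← ZMod.natCast_zmod_val x, natCast_mem_sideInfo_iff h.s_le_m x.val_lt hv]
  exact hwin _ hxt

theorem correct_code {m s n r : ℕ} (h : Params m s n r) : Correct m s (code m s n r) := by
  have := h.neZero
  intro i
  obtain ⟨t, ht, hiso⟩ := exists_isolates_decode h i.val_lt
  refine ⟨decode m s n i.val, mem_decSet_of_isolates h.s_le_m (t := ⟨t, ht⟩) ?_⟩
  rwa [ZMod.val_cast_of_lt hiso.1]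

theorem secure_code {m s n r : ℕ} (h : Params m s n r) : Secure m s (code m s n r) := by
  have := h.neZero
  intro i j₁ h₁ j₂ h₂
  obtain ⟨S₁, hS₁, hiso₁⟩ := exists_revealsOnlyDecode_isolates h h₁
  obtain ⟨S₂, hS₂, hiso₂⟩ := exists_revealsOnlyDecode_isolates h h₂
  exact ZMod.val_injective m ((hS₁ _ i.val_lt _ hiso₁).trans (hS₂ _ i.val_lt _ hiso₂).symm)

end FourToS

end SDPicod

theorem feasible_mod_four_to_s (m s : ℕ) (hs : 5 ≤ s) (hm : 2 * s < m)
    (hlo : 4 ≤ m % (2 * s)) (hhi : m % (2 * s) ≤ s) :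
    ∃ G : Fin (3 * (m - m % (2 * s)) / (2 * s) + 2) → ZMod m → ZMod 2,
      IsDecentralizedCode m s G ∧ Correct m s G ∧ Secure m s G := by
  have hdiv := Nat.div_add_mod m (2 * s)
  have hn : 1 ≤ m / (2 * s) := (Nat.one_le_div_iff (by omega)).mpr hm.le
  have h : FourToS.Params m s (m / (2 * s)) (m % (2 * s)) := ⟨hs, hlo, hhi, hn, hdiv.symm⟩
  have hlen : 3 * (m - m % (2 * s)) / (2 * s) + 2 = 3 * (m / (2 * s)) + 2 := by
    rw [show m - m % (2 * s) = 2 * s * (m / (2 * s)) by omega, mul_left_comm,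
      Nat.mul_div_cancel_left _ (by omega)]
  rw [hlen]
  exact ⟨_, FourToS.isDecentralizedCode_code h, FourToS.correct_code h, FourToS.secure_code h⟩
end
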